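/- arXiv:0904.3764 — 6 statements merged into one kernel-verified Lean document; each statement's English description precedes it below -/
import Mathlib

section
/- If φ : ℚ_n → ℚ_n is a surjective K-bilipschitz map and C ⊆ ℚ_n is a ball (clone), then φ(C) is a finite union of balls; in particular sep(φ(C)) ≥ sep(C)/K. -/
/-- An abstract model of the n-adic numbers `ℚ_n`: a nonempty proper ultrametric
space in which distinct points are at distance an integer power of `n`, closed
balls of radius `n^i` ("clones") have diameter exactly `n^i`, and every clone of
diameter `n^i` splits as a disjoint union of exactly `n` clones of diameter
`n^(i-1)`. -/
structure NadicModel (n : ℕ) (X : Type*) [MetricSpace X] : Prop where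
  n_ge_two : 2 ≤ n
  nonempty : Nonempty X
  ultrametric : ∀ x y z : X, dist x z ≤ max (dist x y) (dist y z)
  dist_pow : ∀ x y : X, x ≠ y → ∃ i : ℤ, dist x y = (n : ℝ) ^ i
  diam_ball : ∀ (x : X) (i : ℤ),
    Metric.diam (Metric.closedBall x ((n : ℝ) ^ i)) = (n : ℝ) ^ i
  subdiv : ∀ (x : X) (i : ℤ), ∃ S : Finset X, S.card = n ∧
    Metric.closedBall x ((n : ℝ) ^ i) = ⋃ y ∈ S, Metric.closedBall y ((n : ℝ) ^ (i - 1)) ∧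
    (S : Set X).Pairwise fun y z =>
      Disjoint (Metric.closedBall y ((n : ℝ) ^ (i - 1))) (Metric.closedBall z ((n : ℝ) ^ (i - 1)))
  proper : ProperSpace X

/-- A clone in `ℚ_n`: a closed ball of radius `n^i` for some `i : ℤ`. -/
def IsClone (n : ℕ) {X : Type*} [MetricSpace X] (C : Set X) : Prop :=
  ∃ (x : X) (i : ℤ), C = Metric.closedBall x ((n : ℝ) ^ i)

/-- `sep B = inf { d(x,y) : x ∈ B, y ∉ B }`. -/
noncomputable def sep {X : Type*} [MetricSpace X] (B : Set X) : ℝ :=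
  sInf {d : ℝ | ∃ x ∈ B, ∃ y ∈ Bᶜ, d = dist x y}

/-- If φ : ℚ_n → ℚ_n is a surjective K-bilipschitz map and C is a
clone, then φ(C) is a finite union of clones, and sep(φ(C)) ≥ sep(C)/K. -/
theorem stmt_2 (n : ℕ) {X : Type*} [MetricSpace X] (hX : NadicModel n X)
    (K : ℝ) (hK : 1 ≤ K) (φ : X → X) (hsurj : Function.Surjective φ)
    (hbilip : ∀ x y : X,
      (1 / K) * dist x y ≤ dist (φ x) (φ y) ∧ dist (φ x) (φ y) ≤ K * dist x y)
    (C : Set X) (hC : IsClone n C) :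
    (∃ 𝒜 : Finset (Set X), (∀ A ∈ 𝒜, IsClone n A) ∧ φ '' C = ⋃ A ∈ 𝒜, A) ∧
      sep C / K ≤ sep (φ '' C) := by

  obtain ⟨x, i, hCx⟩ := hC
  have hn1 : (1:ℝ) < n := by
    have := hX.n_ge_two
    exact_mod_cast lt_of_lt_of_le one_lt_two (by exact_mod_cast this)
  have hn0 : (0:ℝ) < n := lt_trans one_pos hn1
  have hK0 : (0:ℝ) < K := lt_of_lt_of_le one_pos hK
  haveI := hX.proper
  have hpow : ∀ k : ℤ, (0:ℝ) < (n:ℝ)^k := fun k => zpow_pos hn0 k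
  -- recentering lemma
  have recenter : ∀ (a b : X) (r : ℝ), dist a b ≤ r →
      Metric.closedBall a r = Metric.closedBall b r := by
    intro a b r hab
    ext y
    simp only [Metric.mem_closedBall]
    constructor
    · intro h
      calc dist y b ≤ max (dist y a) (dist a b) := hX.ultrametric y a b
        _ ≤ r := max_le h hab
    · intro h
      calc dist y a ≤ max (dist y b) (dist b a) := hX.ultrametric y b a
        _ ≤ r := max_le h (by rwa [dist_comm])
  -- closed balls of radius n^j are open
  have openBall : ∀ (u : X) (j : ℤ), IsOpen (Metric.closedBall u ((n:ℝ)^j)) := by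
    intro u j
    have hball : Metric.closedBall u ((n:ℝ)^j) = Metric.ball u ((n:ℝ)^(j+1)) := by
      ext v
      simp only [Metric.mem_closedBall, Metric.mem_ball]
      constructor
      · intro h
        exact lt_of_le_of_lt h (zpow_lt_zpow_right₀ hn1 (by omega))
      · intro h
        rcases eq_or_ne v u with rfl | hne
        · simp [le_of_lt (hpow j)]
        · obtain ⟨k, hk⟩ := hX.dist_pow v u hne
          rw [hk] at h ⊢
          have hkj : k < j + 1 := (zpow_lt_zpow_iff_right₀ hn1).mp h
          exact zpow_le_zpow_right₀ hn1.le (by omega)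
    rw [hball]; exact Metric.isOpen_ball
  -- continuity and injectivity
  have hφcont : Continuous φ := by
    refine LipschitzWith.continuous (K := ⟨K, hK0.le⟩) (LipschitzWith.of_dist_le_mul ?_)
    intro a b
    exact (hbilip a b).2
  have hinj : Function.Injective φ := by
    intro a b hab
    have h1 := (hbilip a b).1
    rw [hab, dist_self] at h1
    have hd : dist a b ≤ 0 := by
      have h1K : (0:ℝ) < 1 / K := by positivity
      nlinarith [dist_nonneg (x := a) (y := b)]
    exact dist_le_zero.mp hd
  -- complement of C nonempty
  have hCcompl : Cᶜ.Nonempty := by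
    by_contra h
    rw [Set.not_nonempty_iff_eq_empty, Set.compl_empty_iff] at h
    have hsub : Metric.closedBall x ((n:ℝ)^(i+2)) ⊆ Metric.closedBall x ((n:ℝ)^i) := by
      rw [← hCx, h]; exact Set.subset_univ _
    have hdi := Metric.diam_mono hsub Metric.isBounded_closedBall
    rw [hX.diam_ball, hX.diam_ball] at hdi
    exact absurd hdi (not_le.mpr (zpow_lt_zpow_right₀ hn1 (by omega)))
  -- choose j with K * n^j ≤ n^i
  obtain ⟨m, hm⟩ := exists_pow_lt_of_lt_one (div_pos (hpow i) hK0)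
    ((div_lt_one hn0).mpr hn1)
  set j : ℤ := -(m:ℤ) with hj
  have hjval : (n:ℝ)^j = (1/(n:ℝ))^m := by
    rw [hj, zpow_neg, zpow_natCast, one_div_pow, one_div]
  have hKj : K * (n:ℝ)^j ≤ (n:ℝ)^i := by
    rw [hjval]
    have := (lt_div_iff₀ hK0).mp hm
    nlinarith
  -- clone around each image point inside the image
  have key : ∀ u ∈ φ '' C, Metric.closedBall u ((n:ℝ)^j) ⊆ φ '' C := by
    rintro u ⟨a, haC, rfl⟩ v hv
    obtain ⟨b, rfl⟩ := hsurj v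
    refine ⟨b, ?_, rfl⟩
    have h1 := (hbilip a b).1
    have hab : dist a b ≤ K * dist (φ a) (φ b) := by
      have h1K : (0:ℝ) < 1 / K := by positivity
      rw [div_mul_eq_mul_div, one_mul, div_le_iff₀ hK0] at h1
      nlinarith
    have hbv : dist (φ a) (φ b) ≤ (n:ℝ)^j := by
      rw [dist_comm]; exact hv
    have habi : dist a b ≤ (n:ℝ)^i := by
      calc dist a b ≤ K * (n:ℝ)^j := hab.trans (by nlinarith)
        _ ≤ (n:ℝ)^i := hKj
    rw [hCx] at haC ⊢
    rw [← recenter a x _ (Metric.mem_closedBall.mp haC)]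
    rw [Metric.mem_closedBall, dist_comm]
    exact habi
  -- compactness
  have hCcomp : IsCompact C := by rw [hCx]; exact isCompact_closedBall x _
  have himg : IsCompact (φ '' C) := hCcomp.image hφcont
  classical
  obtain ⟨t, ht⟩ := himg.elim_finite_subcover
    (fun u : φ '' C => Metric.closedBall (u : X) ((n:ℝ)^j))
    (fun u => openBall u j)
    (fun v hv => Set.mem_iUnion.mpr ⟨⟨v, hv⟩, by simp [le_of_lt (hpow j)]⟩)
  constructor
  · refine ⟨t.image (fun u : φ '' C => Metric.closedBall (u : X) ((n:ℝ)^j)), ?_, ?_⟩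
    · intro A hA
      obtain ⟨u, _, rfl⟩ := Finset.mem_image.mp hA
      exact ⟨u, j, rfl⟩
    · apply Set.Subset.antisymm
      · intro v hv
        obtain ⟨u, hu⟩ := Set.mem_iUnion.mp (ht hv)
        obtain ⟨hut, huv⟩ := Set.mem_iUnion.mp hu
        refine Set.mem_iUnion.mpr ⟨Metric.closedBall (u : X) ((n:ℝ)^j), ?_⟩
        exact Set.mem_iUnion.mpr ⟨Finset.mem_image_of_mem _ hut, huv⟩
      · intro v hv
        obtain ⟨A, hA⟩ := Set.mem_iUnion.mp hv
        obtain ⟨hA𝒜, hvA⟩ := Set.mem_iUnion.mp hA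
        obtain ⟨u, _, rfl⟩ := Finset.mem_image.mp hA𝒜
        exact key u u.2 hvA
  · -- separation inequality
    obtain ⟨b0, hb0⟩ := hCcompl
    have hx0 : x ∈ C := by
      rw [hCx]; exact Metric.mem_closedBall_self (le_of_lt (hpow i))
    have hsepC_nonneg : 0 ≤ sep C := by
      apply Real.sInf_nonneg
      rintro d ⟨p, _, q, _, rfl⟩
      exact dist_nonneg
    have hφb0 : φ b0 ∈ (φ '' C)ᶜ := by
      intro hmem
      obtain ⟨a, haC, hab⟩ := hmem
      exact hb0 (hinj hab ▸ haC)
    apply le_csInf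
    · exact ⟨dist (φ x) (φ b0), φ x, ⟨x, hx0, rfl⟩, φ b0, hφb0, rfl⟩
    · rintro d ⟨u, hu, v, hv, rfl⟩
      obtain ⟨a, haC, rfl⟩ := hu
      obtain ⟨b, rfl⟩ := hsurj v
      have hbC : b ∉ C := fun hb => hv ⟨b, hb, rfl⟩
      have hsep_le : sep C ≤ dist a b := by
        apply csInf_le
        · exact ⟨0, by rintro d ⟨p, _, q, _, rfl⟩; exact dist_nonneg⟩
        · exact ⟨a, haC, b, hbC, rfl⟩
      have h1 := (hbilip a b).1
      have h1K : (0:ℝ) < 1 / K := by positivity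
      calc sep C / K = (1/K) * sep C := by ring
        _ ≤ (1/K) * dist a b := by nlinarith
        _ ≤ dist (φ a) (φ b) := h1
end

section
/- If φ : ℚ_n → ℚ_n is a surjective map that is measure linear with constant λ on all of ℚ_n (i.e., μ(φ(A)) = λ μ(A) for every ball A, where μ is the Haar/Hausdorff measure normalized so a ball of diameter n^i has measure n^i) and φ is bilipschitz, then λ = r_1^{j_1} ⋯ r_i^{j_i} where each r_l is a prime divisor of n and j_l ∈ ℤ. In particular, if n = r^i for a prime r, then λ = r^j for some j ∈ ℤ. -/
namespace Stmt4Aux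

variable {n : ℕ} {X : Type*} [MetricSpace X]

lemma one_lt_cast (h : 2 ≤ n) : (1 : ℝ) < (n : ℝ) := by
  exact_mod_cast lt_of_lt_of_le one_lt_two h

lemma zpow_pos' (h : 2 ≤ n) (i : ℤ) : (0 : ℝ) < (n : ℝ) ^ i :=
  zpow_pos (lt_trans one_pos (one_lt_cast h)) i

/-- In an ultrametric space, every point of a closed ball is a center. -/
lemma ball_eq_of_mem (hX : NadicModel n X) {x y : X} {i : ℤ}
    (hy : y ∈ Metric.closedBall x ((n : ℝ) ^ i)) :
    Metric.closedBall y ((n : ℝ) ^ i) = Metric.closedBall x ((n : ℝ) ^ i) := by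
  have hxy : dist x y ≤ (n : ℝ) ^ i := by
    rw [dist_comm]; exact Metric.mem_closedBall.1 hy
  ext z
  simp only [Metric.mem_closedBall]
  constructor
  · intro hz
    calc dist z x = dist x z := dist_comm z x
    _ ≤ max (dist x y) (dist y z) := hX.ultrametric x y z
    _ ≤ (n : ℝ) ^ i := max_le hxy (by rwa [dist_comm])
  · intro hz
    calc dist z y = dist y z := dist_comm z y
    _ ≤ max (dist y x) (dist x z) := hX.ultrametric y x z
    _ ≤ (n : ℝ) ^ i := max_le (by rwa [dist_comm] at hxy) (by rwa [dist_comm])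

/-- Two clones of the same radius are equal or disjoint. -/
lemma ball_eq_or_disjoint (hX : NadicModel n X) (x y : X) (i : ℤ) :
    Metric.closedBall x ((n : ℝ) ^ i) = Metric.closedBall y ((n : ℝ) ^ i) ∨
    Disjoint (Metric.closedBall x ((n : ℝ) ^ i)) (Metric.closedBall y ((n : ℝ) ^ i)) := by
  by_cases h : (Metric.closedBall x ((n : ℝ) ^ i) ∩ Metric.closedBall y ((n : ℝ) ^ i)).Nonempty
  · obtain ⟨z, hzx, hzy⟩ := h
    left
    rw [← ball_eq_of_mem hX hzx, ← ball_eq_of_mem hX hzy]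
  · right
    exact Set.disjoint_iff_inter_eq_empty.2 (Set.not_nonempty_iff_eq_empty.1 h)

/-- Clones are open. -/
lemma ball_open (hX : NadicModel n X) (x : X) (i : ℤ) :
    IsOpen (Metric.closedBall x ((n : ℝ) ^ i)) := by
  have h1 : (1 : ℝ) < (n : ℝ) := one_lt_cast hX.n_ge_two
  have : Metric.closedBall x ((n : ℝ) ^ i) = Metric.ball x ((n : ℝ) ^ (i + 1)) := by
    ext z
    simp only [Metric.mem_closedBall, Metric.mem_ball]
    constructor
    · intro hz
      exact lt_of_le_of_lt hz (zpow_lt_zpow_right₀ h1 (lt_add_one i))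
    · intro hz
      rcases eq_or_ne z x with rfl | hne
      · simpa using le_of_lt (zpow_pos' hX.n_ge_two i)
      · obtain ⟨j, hj⟩ := hX.dist_pow z x hne
        rw [hj] at hz ⊢
        have hji : j < i + 1 := (zpow_lt_zpow_iff_right₀ h1).1 hz
        exact zpow_le_zpow_right₀ (le_of_lt h1) (by omega)
  rw [this]; exact Metric.isOpen_ball

lemma exists_zpow_lt (h2 : 2 ≤ n) {ε : ℝ} (hε : 0 < ε) : ∃ i : ℤ, (n : ℝ) ^ i < ε := by
  have h1 : (1 : ℝ) < (n : ℝ) := one_lt_cast h2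
  have hinv : (n : ℝ)⁻¹ < 1 := inv_lt_one_of_one_lt₀ h1
  obtain ⟨k, hk⟩ := exists_pow_lt_of_lt_one hε hinv
  refine ⟨-(k : ℤ), ?_⟩
  rwa [zpow_neg, zpow_natCast, ← inv_pow]

/-- A nonempty compact open set is a finite disjoint union of clones of equal radius. -/
lemma decomp (hX : NadicModel n X) {U : Set X} (hUo : IsOpen U) (hUc : IsCompact U)
    (hUne : U.Nonempty) :
    ∃ (m : ℤ) (𝒜 : Finset (Set X)), 𝒜.Nonempty ∧
      (∀ A ∈ 𝒜, ∃ y : X, A = Metric.closedBall y ((n : ℝ) ^ m)) ∧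
      ((𝒜 : Set (Set X)).Pairwise Disjoint) ∧ U = ⋃ A ∈ 𝒜, A := by
  classical
  have h1 : (1 : ℝ) < (n : ℝ) := one_lt_cast hX.n_ge_two
  -- each point has a clone neighborhood inside U
  have step : ∀ u : U, ∃ i : ℤ, Metric.closedBall (u : X) ((n : ℝ) ^ i) ⊆ U := by
    rintro ⟨u, hu⟩
    obtain ⟨ε, hε, hb⟩ := Metric.isOpen_iff.1 hUo u hu
    obtain ⟨i, hi⟩ := exists_zpow_lt hX.n_ge_two hε
    exact ⟨i, (Metric.closedBall_subset_ball hi).trans hb⟩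
  choose I hI using step
  -- uniform radius via compactness
  obtain ⟨t, ht⟩ := hUc.elim_finite_subcover
    (fun u : U => Metric.closedBall (u : X) ((n : ℝ) ^ I u))
    (fun u => ball_open hX _ _)
    (fun x hx => Set.mem_iUnion.2 ⟨⟨x, hx⟩,
      Metric.mem_closedBall_self (le_of_lt (zpow_pos' hX.n_ge_two _))⟩)
  have htne : t.Nonempty := by
    obtain ⟨x, hx⟩ := hUne
    have := ht hx
    simp only [Set.mem_iUnion] at this
    obtain ⟨u, hu, _⟩ := this
    exact ⟨u, hu⟩
  set m : ℤ := (t.image I).min' (htne.image I) with hm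
  have hmle : ∀ u ∈ t, m ≤ I u := fun u hu =>
    (t.image I).min'_le (I u) (Finset.mem_image_of_mem I hu)
  have key : ∀ x ∈ U, Metric.closedBall x ((n : ℝ) ^ m) ⊆ U := by
    intro x hx
    have := ht hx
    simp only [Set.mem_iUnion] at this
    obtain ⟨u, hu, hxu⟩ := this
    have h2 : Metric.closedBall x ((n : ℝ) ^ I u) = Metric.closedBall (u : X) ((n : ℝ) ^ I u) :=
      ball_eq_of_mem hX hxu
    calc Metric.closedBall x ((n : ℝ) ^ m)
        ⊆ Metric.closedBall x ((n : ℝ) ^ I u) :=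
          Metric.closedBall_subset_closedBall (zpow_le_zpow_right₀ (le_of_lt h1) (hmle u hu))
      _ ⊆ U := h2 ▸ hI u
  -- second compactness: finitely many centers
  obtain ⟨t', ht'⟩ := hUc.elim_finite_subcover
    (fun u : U => Metric.closedBall (u : X) ((n : ℝ) ^ m))
    (fun u => ball_open hX _ _)
    (fun x hx => Set.mem_iUnion.2 ⟨⟨x, hx⟩,
      Metric.mem_closedBall_self (le_of_lt (zpow_pos' hX.n_ge_two _))⟩)
  refine ⟨m, t'.image (fun u : U => Metric.closedBall (u : X) ((n : ℝ) ^ m)), ?_, ?_, ?_, ?_⟩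
  · -- nonempty
    obtain ⟨x, hx⟩ := hUne
    have := ht' hx
    simp only [Set.mem_iUnion] at this
    obtain ⟨u, hu, _⟩ := this
    exact ⟨_, Finset.mem_image_of_mem _ hu⟩
  · intro A hA
    obtain ⟨u, _, rfl⟩ := Finset.mem_image.1 hA
    exact ⟨u, rfl⟩
  · intro A hA B hB hAB
    simp only [Finset.coe_image, Set.mem_image] at hA hB
    obtain ⟨u, _, rfl⟩ := hA
    obtain ⟨v, _, rfl⟩ := hB
    rcases ball_eq_or_disjoint hX (u : X) (v : X) m with h | h
    · exact absurd h hAB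
    · exact h
  · apply Set.Subset.antisymm
    · intro x hx
      have := ht' hx
      simp only [Set.mem_iUnion] at this
      obtain ⟨u, hu, hxu⟩ := this
      exact Set.mem_iUnion₂.2 ⟨_, Finset.mem_image_of_mem _ hu, hxu⟩
    · intro x hx
      obtain ⟨A, hA, hxA⟩ := Set.mem_iUnion₂.1 hx
      simp only [Finset.mem_coe, Finset.mem_image] at hA
      obtain ⟨u, hu, rfl⟩ := hA
      exact key (u : X) u.2 hxA

lemma prod_zpow_sum (r : ℝ) (hr : r ≠ 0) (s : Finset ℕ) (j : ℕ → ℤ) :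
    ∏ p ∈ s, r ^ (j p) = r ^ (∑ p ∈ s, j p) := by
  classical
  induction s using Finset.cons_induction with
  | empty => simp
  | cons a s ha ih => rw [Finset.prod_cons, Finset.sum_cons, zpow_add₀ hr, ih]

/-- Factor a positive natural whose prime factors lie among those of `n`
as a product over `n.primeFactors`. -/
lemma cast_eq_prod (k : ℕ) (hk : k ≠ 0) {N : ℕ} (hN : N ≠ 0)
    (hsub : k.primeFactors ⊆ N.primeFactors) :
    (k : ℝ) = ∏ p ∈ N.primeFactors, (p : ℝ) ^ ((k.factorization p : ℤ)) := by
  classical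
  have h1 : (∏ p ∈ k.primeFactors, p ^ k.factorization p) = k :=
    (Nat.prod_factorization_eq_prod_primeFactors _).symm.trans
      (Nat.factorization_prod_pow_eq_self hk)
  have h2 : (k : ℝ) = ∏ p ∈ k.primeFactors, (p : ℝ) ^ (k.factorization p) := by
    exact_mod_cast h1.symm
  rw [h2]
  rw [Finset.prod_subset hsub (fun p _ hp => by
    have : k.factorization p = 0 := by
      rw [← Nat.support_factorization] at hp
      exact Finsupp.notMem_support_iff.1 hp
    rw [this, pow_zero])]
  refine Finset.prod_congr rfl (fun p hp => ?_)
  rw [← zpow_natCast]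

end Stmt4Aux

open Stmt4Aux

/-- If φ : ℚ_n → ℚ_n is a surjective bilipschitz map that is measure
linear with constant λ on all of ℚ_n (μ(φ(A)) = λ·μ(A) for every clone A, where
μ assigns to each clone its diameter), then λ = r₁^{j₁} ⋯ r_i^{j_i} with each r_l
a prime divisor of n and j_l ∈ ℤ.  In particular if n = r^i with r prime then
λ = r^j for some j ∈ ℤ. -/
theorem stmt_4 (n : ℕ) {X : Type*} [MetricSpace X] (hX : NadicModel n X)
    (μ : Set X → ℝ)
    (hμ_clone : ∀ C : Set X, IsClone n C → μ C = Metric.diam C)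
    (hμ_add : ∀ (𝒜 : Finset (Set X)), (∀ A ∈ 𝒜, IsClone n A) →
      ((𝒜 : Set (Set X)).Pairwise Disjoint) → μ (⋃ A ∈ 𝒜, A) = ∑ A ∈ 𝒜, μ A)
    (K : ℝ) (hK : 1 ≤ K) (φ : X → X) (hsurj : Function.Surjective φ)
    (hbilip : ∀ x y : X,
      (1 / K) * dist x y ≤ dist (φ x) (φ y) ∧ dist (φ x) (φ y) ≤ K * dist x y)
    (lam : ℝ) (hlam : 0 < lam)
    (hml : ∀ A : Set X, IsClone n A → μ (φ '' A) = lam * μ A) :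
    (∃ (s : Finset ℕ) (j : ℕ → ℤ), (∀ p ∈ s, p.Prime ∧ p ∣ n) ∧
      lam = ∏ p ∈ s, (p : ℝ) ^ (j p)) ∧
    (∀ r i : ℕ, r.Prime → n = r ^ i → ∃ j : ℤ, lam = (r : ℝ) ^ j) := by
  classical
  haveI : ProperSpace X := hX.proper
  have h1 : (1 : ℝ) < (n : ℝ) := one_lt_cast hX.n_ge_two
  have hn0 : (0 : ℝ) < (n : ℝ) := lt_trans one_pos h1
  have hKpos : (0 : ℝ) < K := lt_of_lt_of_le one_pos hK
  obtain ⟨x0⟩ := hX.nonempty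
  -- basic facts about φ
  have hcont : Continuous φ := by
    rw [Metric.continuous_iff]
    intro b ε hε
    refine ⟨ε / K, div_pos hε hKpos, fun a ha => ?_⟩
    calc dist (φ a) (φ b) ≤ K * dist a b := (hbilip a b).2
      _ < K * (ε / K) := by exact mul_lt_mul_of_pos_left ha hKpos
      _ = ε := by field_simp
  have hinj : Function.Injective φ := by
    intro a b hab
    have h := (hbilip a b).1
    rw [hab, dist_self] at h
    have : dist a b ≤ 0 := by
      have h2 : (0 : ℝ) < 1 / K := by positivity
      nlinarith [dist_nonneg (x := a) (y := b)]
    exact dist_le_zero.1 this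
  have hlow : ∀ a b : X, dist a b ≤ K * dist (φ a) (φ b) := by
    intro a b
    have h := (hbilip a b).1
    rw [one_div] at h
    calc dist a b = K * (K⁻¹ * dist a b) := by field_simp
    _ ≤ K * dist (φ a) (φ b) := mul_le_mul_of_nonneg_left h (le_of_lt hKpos)
  -- images of clones are open
  have himg_open : ∀ (x : X) (i : ℤ), IsOpen (φ '' Metric.closedBall x ((n : ℝ) ^ i)) := by
    intro x i
    rw [Metric.isOpen_iff]
    rintro p ⟨w, hw, rfl⟩
    obtain ⟨j, hj⟩ := exists_zpow_lt hX.n_ge_two (show (0:ℝ) < (n:ℝ)^i / K by positivity)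
    refine ⟨(n : ℝ) ^ j, zpow_pos' hX.n_ge_two j, ?_⟩
    intro z hz
    obtain ⟨v, rfl⟩ := hsurj z
    have hdv : dist v w ≤ K * dist (φ v) (φ w) := hlow v w
    have hzw : dist (φ v) (φ w) ≤ (n : ℝ) ^ j := le_of_lt (Metric.mem_ball.1 hz)
    have hvw : dist v w ≤ (n : ℝ) ^ i := by
      have : K * dist (φ v) (φ w) ≤ K * ((n:ℝ)^i / K) := by
        refine le_trans (mul_le_mul_of_nonneg_left hzw (le_of_lt hKpos)) ?_
        exact mul_le_mul_of_nonneg_left (le_of_lt hj) (le_of_lt hKpos)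
      have h2 : K * ((n:ℝ)^i / K) = (n:ℝ)^i := by field_simp
      linarith
    have hwC : Metric.closedBall w ((n:ℝ)^i) = Metric.closedBall x ((n:ℝ)^i) :=
      ball_eq_of_mem hX hw
    exact ⟨v, hwC ▸ Metric.mem_closedBall.2 hvw, rfl⟩
  -- measure of a nonempty compact open set
  have hmeas : ∀ U : Set X, IsOpen U → IsCompact U → U.Nonempty →
      ∃ (k : ℕ) (m : ℤ), 0 < k ∧ μ U = (k : ℝ) * (n : ℝ) ^ m := by
    intro U hUo hUc hUne
    obtain ⟨m, 𝒜, h𝒜ne, h𝒜ball, h𝒜disj, hUeq⟩ := decomp hX hUo hUc hUne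
    refine ⟨𝒜.card, m, Finset.card_pos.2 h𝒜ne, ?_⟩
    have hclone : ∀ A ∈ 𝒜, IsClone n A := fun A hA => by
      obtain ⟨y, rfl⟩ := h𝒜ball A hA; exact ⟨y, m, rfl⟩
    rw [hUeq, hμ_add 𝒜 hclone h𝒜disj]
    have : ∀ A ∈ 𝒜, μ A = (n : ℝ) ^ m := by
      intro A hA
      obtain ⟨y, rfl⟩ := h𝒜ball A hA
      rw [hμ_clone _ ⟨y, m, rfl⟩, hX.diam_ball]
    rw [Finset.sum_congr rfl this, Finset.sum_const, nsmul_eq_mul]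
  -- the unit clone
  set C : Set X := Metric.closedBall x0 ((n : ℝ) ^ (0 : ℤ)) with hC
  have hCclone : IsClone n C := ⟨x0, 0, rfl⟩
  have hμC : μ C = 1 := by rw [hμ_clone _ hCclone, hX.diam_ball, zpow_zero]
  have hCcompact : IsCompact C := isCompact_closedBall x0 _
  have hCne : C.Nonempty := ⟨x0, Metric.mem_closedBall_self (le_of_lt (zpow_pos' hX.n_ge_two 0))⟩
  -- Part 1 : lam = k * n ^ m
  obtain ⟨k, m, hkpos, hμφC⟩ := hmeas (φ '' C) (himg_open x0 0)
    (hCcompact.image hcont) (hCne.image φ)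
  have hlam_eq : lam = (k : ℝ) * (n : ℝ) ^ m := by
    have := hml C hCclone
    rw [hμC, mul_one] at this
    rw [← this, hμφC]
  -- Part 2 : preimage of the unit clone
  set U : Set X := φ ⁻¹' C with hU
  have hUo : IsOpen U := (ball_open hX x0 0).preimage hcont
  have hUclosed : IsClosed U := Metric.isClosed_closedBall.preimage hcont
  have hUbdd : Bornology.IsBounded U := by
    rw [Metric.isBounded_iff]
    refine ⟨K * ((n:ℝ)^(0:ℤ) + (n:ℝ)^(0:ℤ)), fun a ha b hb => ?_⟩
    have h1' : dist (φ a) x0 ≤ (n:ℝ)^(0:ℤ) := Metric.mem_closedBall.1 ha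
    have h2' : dist (φ b) x0 ≤ (n:ℝ)^(0:ℤ) := Metric.mem_closedBall.1 hb
    have h3 : dist (φ a) (φ b) ≤ (n:ℝ)^(0:ℤ) + (n:ℝ)^(0:ℤ) := by
      calc dist (φ a) (φ b) ≤ dist (φ a) x0 + dist x0 (φ b) := dist_triangle _ _ _
      _ ≤ (n:ℝ)^(0:ℤ) + (n:ℝ)^(0:ℤ) := by rw [dist_comm x0 (φ b)]; linarith
    calc dist a b ≤ K * dist (φ a) (φ b) := hlow a b
    _ ≤ K * ((n:ℝ)^(0:ℤ) + (n:ℝ)^(0:ℤ)) := mul_le_mul_of_nonneg_left h3 (le_of_lt hKpos)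
  have hUc : IsCompact U := Metric.isCompact_of_isClosed_isBounded hUclosed hUbdd
  have hUne : U.Nonempty := by
    obtain ⟨w, hw⟩ := hsurj x0
    refine ⟨w, ?_⟩
    show φ w ∈ C
    rw [hw]
    exact Metric.mem_closedBall_self (le_of_lt (zpow_pos' hX.n_ge_two 0))
  obtain ⟨m', 𝒜', h𝒜'ne, h𝒜'ball, h𝒜'disj, hUeq⟩ := decomp hX hUo hUc hUne
  -- decompose each image φ '' A into clones
  have hdec : ∀ A : Set X, ∃ 𝒞 : Finset (Set X), A ∈ 𝒜' →
      ((∀ B ∈ 𝒞, IsClone n B) ∧ ((𝒞 : Set (Set X)).Pairwise Disjoint) ∧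
        φ '' A = ⋃ B ∈ 𝒞, B) := by
    intro A
    by_cases hA : A ∈ 𝒜'
    · obtain ⟨y, rfl⟩ := h𝒜'ball A hA
      have hAo : IsOpen (φ '' Metric.closedBall y ((n:ℝ)^m')) := himg_open y m'
      have hAc : IsCompact (φ '' Metric.closedBall y ((n:ℝ)^m')) :=
        (isCompact_closedBall y _).image hcont
      have hAne : (φ '' Metric.closedBall y ((n:ℝ)^m')).Nonempty :=
        Set.Nonempty.image φ
          ⟨y, Metric.mem_closedBall_self (le_of_lt (zpow_pos' hX.n_ge_two m'))⟩
      obtain ⟨mB, 𝒞, _, h𝒞ball, h𝒞disj, h𝒞eq⟩ := decomp hX hAo hAc hAne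
      exact ⟨𝒞, fun _ => ⟨fun B hB => by obtain ⟨z, rfl⟩ := h𝒞ball B hB; exact ⟨z, mB, rfl⟩,
        h𝒞disj, h𝒞eq⟩⟩
    · exact ⟨∅, fun h => absurd h hA⟩
  choose g hg using hdec
  -- clones are nonempty
  have hclone_ne : ∀ B : Set X, IsClone n B → B.Nonempty := by
    rintro B ⟨y, i, rfl⟩
    exact ⟨y, Metric.mem_closedBall_self (le_of_lt (zpow_pos' hX.n_ge_two i))⟩
  -- images of distinct members of 𝒜' are disjoint
  have himg_disj : ∀ A1 ∈ 𝒜', ∀ A2 ∈ 𝒜', A1 ≠ A2 → Disjoint (φ '' A1) (φ '' A2) := by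
    intro A1 h1' A2 h2' hne
    exact Set.disjoint_image_of_injective hinj (h𝒜'disj h1' h2' hne)
  set 𝒞all : Finset (Set X) := 𝒜'.biUnion g with h𝒞all
  have h𝒞all_clone : ∀ B ∈ 𝒞all, IsClone n B := by
    intro B hB
    obtain ⟨A, hA, hBA⟩ := Finset.mem_biUnion.1 hB
    exact ((hg A) hA).1 B hBA
  have hsubimg : ∀ A ∈ 𝒜', ∀ B ∈ g A, B ⊆ φ '' A := by
    intro A hA B hB
    rw [((hg A) hA).2.2]
    intro z hz
    exact Set.mem_iUnion₂.2 ⟨B, hB, hz⟩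
  have h𝒞all_disj : ((𝒞all : Set (Set X)).Pairwise Disjoint) := by
    intro B1 hB1 B2 hB2 hne
    simp only [h𝒞all, Finset.coe_biUnion, Set.mem_iUnion, Finset.mem_coe] at hB1 hB2
    obtain ⟨A1, hA1, hB1A⟩ := hB1
    obtain ⟨A2, hA2, hB2A⟩ := hB2
    rcases eq_or_ne A1 A2 with rfl | hAne
    · exact ((hg A1) hA1).2.1 hB1A hB2A hne
    · exact Set.disjoint_of_subset (hsubimg A1 hA1 B1 hB1A) (hsubimg A2 hA2 B2 hB2A)
        (himg_disj A1 hA1 A2 hA2 hAne)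
  have hgdisj : (↑𝒜' : Set (Set X)).PairwiseDisjoint g := by
    intro A1 hA1 A2 hA2 hAne
    show Disjoint (g A1) (g A2)
    rw [Finset.disjoint_left]
    intro B hB1 hB2
    obtain ⟨z, hz⟩ := hclone_ne B (((hg A1) hA1).1 B hB1)
    exact (Set.disjoint_iff.1 (himg_disj A1 hA1 A2 hA2 hAne)
      ⟨hsubimg A1 hA1 B hB1 hz, hsubimg A2 hA2 B hB2 hz⟩).elim
  -- μ C = total sum
  have hC_union : C = ⋃ B ∈ 𝒞all, B := by
    have h0 : C = φ '' U := (Set.image_preimage_eq C hsurj).symm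
    rw [h0, hUeq, Set.image_iUnion₂]
    rw [h𝒞all, Finset.set_biUnion_biUnion]
    exact Set.iUnion₂_congr (fun A hA => ((hg A) hA).2.2)
  have hμC2 : μ C = ∑ B ∈ 𝒞all, μ B := by
    rw [hC_union]; exact hμ_add 𝒞all h𝒞all_clone h𝒞all_disj
  have hsum : ∑ B ∈ 𝒞all, μ B = ∑ A ∈ 𝒜', μ (φ '' A) := by
    rw [h𝒞all, Finset.sum_biUnion hgdisj]
    refine Finset.sum_congr rfl (fun A hA => ?_)
    rw [((hg A) hA).2.2]
    exact (hμ_add (g A) (((hg A) hA).1) (((hg A) hA).2.1)).symm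
  have hμφA : ∀ A ∈ 𝒜', μ (φ '' A) = lam * (n : ℝ) ^ m' := by
    intro A hA
    obtain ⟨y, rfl⟩ := h𝒜'ball A hA
    rw [hml _ ⟨y, m', rfl⟩, hμ_clone _ ⟨y, m', rfl⟩, hX.diam_ball]
  have hfinal : (1 : ℝ) = (𝒜'.card : ℝ) * (lam * (n : ℝ) ^ m') := by
    rw [← hμC, hμC2, hsum, Finset.sum_congr rfl hμφA, Finset.sum_const, nsmul_eq_mul]
  set k' : ℕ := 𝒜'.card with hk'
  have hk'pos : 0 < k' := Finset.card_pos.2 h𝒜'ne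
  -- combine : (k * k' : ℝ) = n ^ (-(m + m'))
  have hcomb : ((k * k' : ℕ) : ℝ) = (n : ℝ) ^ (-(m + m')) := by
    have h2 : (1 : ℝ) = (k' : ℝ) * (((k : ℝ) * (n:ℝ)^m) * (n : ℝ) ^ m') := by
      rw [← hlam_eq]; exact hfinal
    have hmul : ((n:ℝ)^m * (n:ℝ)^m') * ((k : ℝ) * (k' : ℝ)) = 1 := by
      linear_combination -h2
    push_cast
    rw [zpow_neg, zpow_add₀ (ne_of_gt hn0)]
    exact eq_inv_of_mul_eq_one_right hmul
  have hkk'pos : 0 < k * k' := Nat.mul_pos hkpos hk'pos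
  have hmm' : 0 ≤ -(m + m') := by
    by_contra h
    push_neg at h
    have h2 : (n : ℝ) ^ (-(m + m')) < (n : ℝ) ^ (0 : ℤ) :=
      zpow_lt_zpow_right₀ h1 h
    rw [zpow_zero] at h2
    have h3 : (1 : ℝ) ≤ ((k * k' : ℕ) : ℝ) := by exact_mod_cast hkk'pos
    rw [hcomb] at h3
    linarith
  set T : ℕ := (-(m + m')).toNat with hT
  have hTeq : ((-(m + m')) : ℤ) = (T : ℤ) := (Int.toNat_of_nonneg hmm').symm
  have hkkT : k * k' = n ^ T := by
    have : ((k * k' : ℕ) : ℝ) = ((n ^ T : ℕ) : ℝ) := by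
      rw [hcomb, hTeq]
      push_cast
      rw [zpow_natCast]
    exact_mod_cast this
  have hkdvd : k ∣ n ^ T := ⟨k', hkkT.symm⟩
  have hn0' : n ≠ 0 := by have := hX.n_ge_two; omega
  have hk0 : k ≠ 0 := hkpos.ne'
  -- prime factors of k are among those of n
  have hsub : k.primeFactors ⊆ n.primeFactors := by
    intro p hp
    obtain ⟨hpp, hpk, _⟩ := Nat.mem_primeFactors.1 hp
    exact Nat.mem_primeFactors.2 ⟨hpp, hpp.dvd_of_dvd_pow (hpk.trans hkdvd), hn0'⟩
  -- main product formula
  have hkprod : (k : ℝ) = ∏ p ∈ n.primeFactors, (p : ℝ) ^ ((k.factorization p : ℤ)) :=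
    cast_eq_prod k hk0 hn0' hsub
  have hnprod : (n : ℝ) = ∏ p ∈ n.primeFactors, (p : ℝ) ^ ((n.factorization p : ℤ)) :=
    cast_eq_prod n hn0' hn0' (le_refl _)
  have hp_ne : ∀ p ∈ n.primeFactors, (p : ℝ) ≠ 0 := by
    intro p hp
    have := (Nat.mem_primeFactors.1 hp).1.pos
    positivity
  have hnm_prod : (n : ℝ) ^ m = ∏ p ∈ n.primeFactors, (p : ℝ) ^ (m * (n.factorization p : ℤ)) := by
    rw [hnprod, ← Finset.prod_zpow]
    refine Finset.prod_congr rfl (fun p hp => ?_)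
    rw [← zpow_mul, mul_comm]
  refine ⟨⟨n.primeFactors, fun p => (k.factorization p : ℤ) + m * (n.factorization p : ℤ),
    fun p hp => ⟨(Nat.mem_primeFactors.1 hp).1, (Nat.mem_primeFactors.1 hp).2.1⟩, ?_⟩, ?_⟩
  · rw [hlam_eq, hkprod, hnm_prod, ← Finset.prod_mul_distrib]
    exact Finset.prod_congr rfl (fun p hp => (zpow_add₀ (hp_ne p hp) _ _).symm)
  · -- n = r ^ i case
    intro r i hr hni
    refine ⟨∑ p ∈ n.primeFactors, ((k.factorization p : ℤ) + m * (n.factorization p : ℤ)), ?_⟩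
    have hall : ∀ p ∈ n.primeFactors, p = r := by
      intro p hp
      obtain ⟨hpp, hpn, _⟩ := Nat.mem_primeFactors.1 hp
      rw [hni] at hpn
      exact (Nat.prime_dvd_prime_iff_eq hpp hr).1 (hpp.dvd_of_dvd_pow hpn)
    have hr0 : (r : ℝ) ≠ 0 := by
      have := hr.pos; positivity
    calc lam = ∏ p ∈ n.primeFactors,
          (p : ℝ) ^ ((k.factorization p : ℤ) + m * (n.factorization p : ℤ)) := by
          rw [hlam_eq, hkprod, hnm_prod, ← Finset.prod_mul_distrib]
          exact Finset.prod_congr rfl (fun p hp => (zpow_add₀ (hp_ne p hp) _ _).symm)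
      _ = ∏ p ∈ n.primeFactors,
          (r : ℝ) ^ ((k.factorization p : ℤ) + m * (n.factorization p : ℤ)) :=
          Finset.prod_congr rfl (fun p hp => by rw [hall p hp])
      _ = (r : ℝ) ^ (∑ p ∈ n.primeFactors,
          ((k.factorization p : ℤ) + m * (n.factorization p : ℤ))) :=
          prod_zpow_sum (r : ℝ) hr0 _ _
end

section
/- Let X be a uniformly discrete metric space and f_i : X → X a sequence of m-to-1 maps converging pointwise to a map f (i.e., for every x there is i_x with f_i(x) = f(x) for i ≥ i_x, using uniform discreteness). If moreover the convergence is uniform on bounded sets and each f_i is a (K,C)-quasi-isometry, then f is m-to-1 on its image in the sense that every point of X has exactly m preimages under f. -/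
/-- Let X be a uniformly discrete metric space and f_i a sequence of
m-to-1 (K,C)-quasi-isometries converging pointwise (hence eventually equal at each
point) to f, with the convergence uniform on bounded sets.  Then f is m-to-1:
every point of X has exactly m preimages under f. -/
theorem stmt_7 {X : Type*} [MetricSpace X]
    (ε : ℝ) (hε : 0 < ε) (hdisc : ∀ x y : X, x ≠ y → ε ≤ dist x y)
    (m : ℕ) (hm : 0 < m) (K C : ℝ) (hK : 1 ≤ K) (hC : 0 ≤ C)
    (f : X → X) (fseq : ℕ → X → X)
    (hfib : ∀ i : ℕ, ∀ y : X, Nat.card (fseq i ⁻¹' {y}) = m)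
    (hqi : ∀ i : ℕ, ∀ x y : X,
      (1 / K) * dist x y - C ≤ dist (fseq i x) (fseq i y) ∧
      dist (fseq i x) (fseq i y) ≤ K * dist x y + C)
    (hptwise : ∀ x : X, ∃ ix : ℕ, ∀ i ≥ ix, fseq i x = f x)
    (hunif : ∀ B : Set X, Bornology.IsBounded B →
      ∃ iB : ℕ, ∀ i ≥ iB, ∀ x ∈ B, fseq i x = f x) :
    ∀ y : X, Nat.card (f ⁻¹' {y}) = m := by
  intro y
  obtain ⟨iy, hiy⟩ := hptwise y
  have hK0 : (0:ℝ) < K := lt_of_lt_of_le one_pos hK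
  set R := K * (dist y (f y) + C) with hR
  have hball : ∀ i ≥ iy, fseq i ⁻¹' {y} ⊆ Metric.closedBall y R := by
    intro i hi x hx
    simp only [Set.mem_preimage, Set.mem_singleton_iff] at hx
    have h1 := (hqi i x y).1
    rw [hx, hiy i hi] at h1
    have hKinv : (1 / K) * K = 1 := by field_simp
    simp only [Metric.mem_closedBall, hR]
    nlinarith [dist_nonneg (x := x) (y := y)]
  obtain ⟨iB, hiB⟩ := hunif (Metric.closedBall y R) Metric.isBounded_closedBall
  set N := max iB iy with hN
  have hNB : N ≥ iB := le_max_left _ _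
  have hNy : N ≥ iy := le_max_right _ _
  have hsub : ∀ x, f x = y → x ∈ Metric.closedBall y R := by
    intro x hx
    obtain ⟨ix, hix⟩ := hptwise x
    have hxy : fseq (max ix iy) x = y := by rw [hix _ (le_max_left _ _), hx]
    exact hball _ (le_max_right _ _) hxy
  have heq : f ⁻¹' {y} = fseq N ⁻¹' {y} := by
    ext x
    simp only [Set.mem_preimage, Set.mem_singleton_iff]
    constructor
    · intro hx
      rw [hiB N hNB x (hsub x hx)]; exact hx
    · intro hx
      have hxB : x ∈ Metric.closedBall y R := hball N hNy hx
      rw [← hiB N hNB x hxB]; exact hx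
  rw [heq]; exact hfib N y
end

section
/- For any increasing sequence of heights H_i, the sequence of boxes S_{H_i} in DL(n,n) is a Følner sequence: for every r > 0, |∂_r S_{H_i}| / |S_{H_i}| → 0 as i → ∞; indeed |S_H| = (H+1)n^H while |∂_r S_H| ≤ C_r · n^H for a constant C_r depending only on r and n. -/
/-- The oriented regular tree `T_{n+1}`: every vertex has one outgoing edge (to its
`parent`, one level up) and exactly `n` incoming edges, together with an integer
height (Busemann) function, and any two vertices have a common ancestor. -/
structure OrientedTree (n : ℕ) where
  V : Type
  ne : Nonempty V
  h : V → ℤ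
  parent : V → V
  h_parent : ∀ v, h (parent v) = h v + 1
  children : ∀ v : V, Nat.card {w : V // parent w = v} = n
  connected : ∀ v w : V, ∃ k l : ℕ, parent^[k] v = parent^[l] w

variable {n : ℕ}

/-- The vertex set of the Diestel–Leader graph `DL(n,n)`:
pairs of tree vertices with opposite heights. -/
def DLVert (T1 T2 : OrientedTree n) : Type :=
  {p : T1.V × T2.V // T1.h p.1 + T2.h p.2 = 0}

/-- The height function on `DL(n,n)`. -/
def DLht {T1 T2 : OrientedTree n} (v : DLVert T1 T2) : ℤ := T1.h v.val.1

/-- One upward step in `DL(n,n)`. -/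
def DLstep {T1 T2 : OrientedTree n} (v w : DLVert T1 T2) : Prop :=
  T1.parent v.val.1 = w.val.1 ∧ T2.parent w.val.2 = v.val.2

/-- The Diestel–Leader graph `DL(n,n)` as a simple graph on `DLVert`. -/
def DLGraph (T1 T2 : OrientedTree n) : SimpleGraph (DLVert T1 T2) where
  Adj v w := DLstep v w ∨ DLstep w v
  symm := ⟨by intro v w hvw; tauto⟩
  loopless := ⟨by
    intro v hv
    have hp := T1.h_parent v.val.1
    rcases hv with h' | h' <;> · rw [h'.1] at hp; omega⟩

/-- The box (connected component of `ht⁻¹([a, a+H])`) in `DL(n,n)` determined by a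
vertex `p0` of the first tree at height `a+H` and a vertex `q0` of the second tree
at height `-a`: all DL-vertices whose first coordinate descends from `p0` and whose
second coordinate descends from `q0`. -/
def DLbox {T1 T2 : OrientedTree n} (p0 : T1.V) (q0 : T2.V) : Set (DLVert T1 T2) :=
  {v | (∃ k : ℕ, T1.parent^[k] v.val.1 = p0) ∧ ∃ l : ℕ, T2.parent^[l] v.val.2 = q0}

/-- The `r`-boundary of a set `S` of vertices: points of `S` within graph distance
`r` of the complement together with points of the complement within graph
distance `r` of `S`. -/
def DLrBoundary {T1 T2 : OrientedTree n} (r : ℕ) (S : Set (DLVert T1 T2)) :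
    Set (DLVert T1 T2) :=
  {v | (v ∈ S ∧ ∃ w ∉ S, (DLGraph T1 T2).Reachable v w ∧ (DLGraph T1 T2).dist v w ≤ r) ∨
       (v ∉ S ∧ ∃ w ∈ S, (DLGraph T1 T2).Reachable v w ∧ (DLGraph T1 T2).dist v w ≤ r)}

section Tree

variable {n : ℕ}

lemma OrientedTree.h_iter (T : OrientedTree n) (k : ℕ) (v : T.V) :
    T.h (T.parent^[k] v) = T.h v + k := by
  induction k with
  | zero => simp
  | succ k ih =>
    rw [Function.iterate_succ_apply', T.h_parent, ih]
    push_cast; ring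

lemma OrientedTree.depth_unique (T : OrientedTree n) {k l : ℕ} {v x : T.V}
    (hk : T.parent^[k] v = x) (hl : T.parent^[l] v = x) : k = l := by
  have h1 := T.h_iter k v
  have h2 := T.h_iter l v
  rw [hk] at h1; rw [hl] at h2; omega

lemma OrientedTree.child_finite (T : OrientedTree n) (hn : 1 ≤ n) (x : T.V) :
    Finite {w : T.V // T.parent w = x} := by
  have := T.children x
  exact (Nat.card_pos_iff.mp (by omega)).2

/-- Descendants at depth `k` form a finite set of cardinality `n^k`. -/
lemma OrientedTree.desc_card (T : OrientedTree n) (hn : 1 ≤ n) (k : ℕ) (x : T.V) :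
    Finite {w : T.V // T.parent^[k] w = x} ∧
      Nat.card {w : T.V // T.parent^[k] w = x} = n ^ k := by
  induction k generalizing x with
  | zero =>
    constructor
    · exact Finite.of_injective (fun w => (() : Unit)) (by
        rintro ⟨w, hw⟩ ⟨w', hw'⟩ _
        simp only [Function.iterate_zero, id] at hw hw'
        simp [hw, hw'])
    · rw [pow_zero]
      have : ∀ w : {w : T.V // T.parent^[0] w = x}, w = ⟨x, rfl⟩ := by
        rintro ⟨w, hw⟩
        simp only [Function.iterate_zero, id] at hw
        simp [hw]
      rw [Nat.card_eq_one_iff_unique]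
      exact ⟨⟨fun a b => (this a).trans (this b).symm⟩, ⟨⟨x, rfl⟩⟩⟩
  | succ k ih =>
    have hcf := T.child_finite hn x
    have hfib : ∀ c : {c : T.V // T.parent c = x}, Finite {w : T.V // T.parent^[k] w = c.1} :=
      fun c => (ih c.1).1
    -- equivalence with sigma type
    let e : {w : T.V // T.parent^[k+1] w = x} ≃
        Σ c : {c : T.V // T.parent c = x}, {w : T.V // T.parent^[k] w = c.1} :=
      { toFun := fun w => ⟨⟨T.parent^[k] w.1, by
            have := w.2; rwa [Function.iterate_succ_apply'] at this⟩, ⟨w.1, rfl⟩⟩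
        invFun := fun s => ⟨s.2.1, by
            rw [Function.iterate_succ_apply', s.2.2]; exact s.1.2⟩
        left_inv := by rintro ⟨w, hw⟩; rfl
        right_inv := by
          rintro ⟨⟨c, hc⟩, ⟨w, hw⟩⟩
          simp only [Subtype.coe_mk] at hw
          subst hw
          rfl
      }
    have hfin : Finite {w : T.V // T.parent^[k+1] w = x} := by
      have : Finite (Σ c : {c : T.V // T.parent c = x}, {w : T.V // T.parent^[k] w = c.1}) := by
        have := hfib; exact Finite.instSigma
      exact Finite.of_equiv _ e.symm
    refine ⟨hfin, ?_⟩
    rw [Nat.card_congr e]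
    have : ∀ c : {c : T.V // T.parent c = x},
        Nat.card {w : T.V // T.parent^[k] w = c.1} = n ^ k := fun c => (ih c.1).2
    classical
    have hcfin : Fintype {c : T.V // T.parent c = x} := Fintype.ofFinite _
    have hfibf : ∀ c : {c : T.V // T.parent c = x}, Fintype {w : T.V // T.parent^[k] w = c.1} :=
      fun c => Fintype.ofFinite _
    rw [Nat.card_eq_fintype_card, Fintype.card_sigma]
    calc ∑ c : {c : T.V // T.parent c = x}, Fintype.card {w : T.V // T.parent^[k] w = c.1}
        = ∑ _c : {c : T.V // T.parent c = x}, n ^ k := by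
          apply Finset.sum_congr rfl
          intro c _
          rw [← Nat.card_eq_fintype_card, this c]
      _ = Fintype.card {c : T.V // T.parent c = x} * n ^ k := by
          rw [Finset.sum_const, Finset.card_univ, smul_eq_mul]
      _ = n ^ (k+1) := by
          rw [← Nat.card_eq_fintype_card, T.children x, pow_succ, mul_comm]

end Tree
section Helpers

variable {α ι : Type*}

lemma ncard_finset_biUnion_le (K : Finset ι) (A : ι → Set α)
    (hfin : ∀ k ∈ K, (A k).Finite) :
    (⋃ k ∈ K, A k).Finite ∧ (⋃ k ∈ K, A k).ncard ≤ ∑ k ∈ K, (A k).ncard := by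
  classical
  induction K using Finset.induction with
  | empty => simp
  | insert _ _ hx ih =>
    rename_i a K
    rw [Finset.set_biUnion_insert, Finset.sum_insert hx]
    have h1 := hfin a (Finset.mem_insert_self a K)
    have h2 := ih (fun k hk => hfin k (Finset.mem_insert_of_mem hk))
    exact ⟨h1.union h2.1, le_trans (Set.ncard_union_le _ _) (by gcongr; exact h2.2)⟩

lemma ncard_finset_biUnion_eq (K : Finset ι) (A : ι → Set α)
    (hfin : ∀ k ∈ K, (A k).Finite)
    (hdisj : ∀ k ∈ K, ∀ l ∈ K, k ≠ l → Disjoint (A k) (A l)) :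
    (⋃ k ∈ K, A k).ncard = ∑ k ∈ K, (A k).ncard := by
  classical
  induction K using Finset.induction with
  | empty => simp
  | insert _ _ hx ih =>
    rename_i a K
    rw [Finset.set_biUnion_insert, Finset.sum_insert hx]
    have h1 := hfin a (Finset.mem_insert_self a K)
    have h2 := ncard_finset_biUnion_le K A (fun k hk => hfin k (Finset.mem_insert_of_mem hk))
    rw [Set.ncard_union_eq ?_ h1 h2.1]
    · rw [ih (fun k hk => hfin k (Finset.mem_insert_of_mem hk))
        (fun k hk l hl => hdisj k (Finset.mem_insert_of_mem hk) l (Finset.mem_insert_of_mem hl))]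
    · rw [Set.disjoint_iUnion₂_right]
      intro k hk
      exact hdisj a (Finset.mem_insert_self a K) k (Finset.mem_insert_of_mem hk)
        (fun h => hx (h ▸ hk))

end Helpers

section Box

variable {n : ℕ} {T1 T2 : OrientedTree n}

/-- The slice of the box at first-coordinate depth `k`. -/
def boxSlice (p0 : T1.V) (q0 : T2.V) (H k : ℕ) : Set (DLVert T1 T2) :=
  {v | T1.parent^[k] v.val.1 = p0 ∧ T2.parent^[H - k] v.val.2 = q0}

lemma boxSlice_card (hn : 1 ≤ n) (p0 : T1.V) (q0 : T2.V) {a : ℤ} {H k : ℕ}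
    (hp0 : T1.h p0 = a + H) (hq0 : T2.h q0 = -a) (hk : k ≤ H) :
    (boxSlice p0 q0 H k).Finite ∧ (boxSlice p0 q0 H k).ncard = n ^ H := by
  have e : ↥(boxSlice p0 q0 H k) ≃
      {p : T1.V // T1.parent^[k] p = p0} × {q : T2.V // T2.parent^[H - k] q = q0} :=
    { toFun := fun v => (⟨v.1.val.1, v.2.1⟩, ⟨v.1.val.2, v.2.2⟩)
      invFun := fun s => ⟨⟨(s.1.1, s.2.1), by
          have h1 := T1.h_iter k s.1.1
          have h2 := T2.h_iter (H - k) s.2.1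
          rw [s.1.2, hp0] at h1
          rw [s.2.2, hq0] at h2
          have : ((H - k : ℕ) : ℤ) = (H : ℤ) - k := by
            rw [Nat.cast_sub hk]
          show T1.h s.1.1 + T2.h s.2.1 = 0
          omega⟩, ⟨s.1.2, s.2.2⟩⟩
      left_inv := by rintro ⟨⟨⟨p, q⟩, hpq⟩, hp, hq⟩; rfl
      right_inv := by rintro ⟨⟨p, hp⟩, ⟨q, hq⟩⟩; rfl }
  have d1 := T1.desc_card hn k p0
  have d2 := T2.desc_card hn (H - k) q0
  have hfin : Finite ↥(boxSlice p0 q0 H k) := by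
    have := d1.1; have := d2.1
    exact Finite.of_equiv _ e.symm
  refine ⟨hfin, ?_⟩
  rw [← Nat.card_coe_set_eq, Nat.card_congr e, Nat.card_prod, d1.2, d2.2,
    ← pow_add, Nat.add_sub_cancel' hk]

lemma mem_box_iff (p0 : T1.V) (q0 : T2.V) {a : ℤ} {H : ℕ}
    (hp0 : T1.h p0 = a + H) (hq0 : T2.h q0 = -a) (v : DLVert T1 T2) :
    v ∈ DLbox p0 q0 ↔ ∃ k ≤ H, v ∈ boxSlice p0 q0 H k := by
  constructor
  · rintro ⟨⟨k, hk⟩, ⟨l, hl⟩⟩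
    have h1 := T1.h_iter k v.val.1
    have h2 := T2.h_iter l v.val.2
    rw [hk, hp0] at h1
    rw [hl, hq0] at h2
    have hv := v.2
    have hkl : k + l = H := by omega
    refine ⟨k, by omega, hk, ?_⟩
    have : H - k = l := by omega
    rw [this]; exact hl
  · rintro ⟨k, hk, h1, h2⟩
    exact ⟨⟨k, h1⟩, ⟨H - k, h2⟩⟩

lemma box_eq (p0 : T1.V) (q0 : T2.V) {a : ℤ} {H : ℕ}
    (hp0 : T1.h p0 = a + H) (hq0 : T2.h q0 = -a) :
    DLbox p0 q0 = ⋃ k ∈ Finset.range (H + 1), boxSlice p0 q0 H k := by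
  ext v
  rw [mem_box_iff p0 q0 hp0 hq0]
  simp only [Set.mem_iUnion, Finset.mem_range]
  constructor
  · rintro ⟨k, hk, hv⟩; exact ⟨k, by omega, hv⟩
  · rintro ⟨k, hk, hv⟩; exact ⟨k, by omega, hv⟩

lemma boxSlice_disjoint (p0 : T1.V) (q0 : T2.V) {H : ℕ} {k l : ℕ} (hkl : k ≠ l) :
    Disjoint (boxSlice p0 q0 H k) (boxSlice p0 q0 H l) := by
  rw [Set.disjoint_left]
  rintro v ⟨h1, _⟩ ⟨h2, _⟩
  exact hkl (T1.depth_unique h1 h2)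

lemma box_ncard (hn : 1 ≤ n) (p0 : T1.V) (q0 : T2.V) {a : ℤ} {H : ℕ}
    (hp0 : T1.h p0 = a + H) (hq0 : T2.h q0 = -a) :
    (DLbox p0 q0).Finite ∧ (DLbox p0 q0).ncard = (H + 1) * n ^ H := by
  rw [box_eq p0 q0 hp0 hq0]
  have hfin : ∀ k ∈ Finset.range (H + 1), (boxSlice p0 q0 H k : Set (DLVert T1 T2)).Finite :=
    fun k hk => (boxSlice_card hn p0 q0 hp0 hq0 (by simp at hk; omega)).1
  refine ⟨(ncard_finset_biUnion_le _ _ hfin).1, ?_⟩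
  rw [ncard_finset_biUnion_eq _ _ hfin
    (fun k _ l _ h => boxSlice_disjoint p0 q0 h)]
  rw [Finset.sum_congr rfl (fun k hk =>
    (boxSlice_card hn p0 q0 hp0 hq0 (by simp at hk; omega)).2)]
  simp [Finset.sum_const, Finset.card_range]

end Box
section Walks

variable {n : ℕ} {T1 T2 : OrientedTree n}

/-- Generic escape lemma: along a walk in `DL(n,n)`, a coordinate that is a
descendant of `x0` at depth `k` needs at least `k+1` steps to stop being a
descendant of `x0`. -/
lemma escape_lemma (T : OrientedTree n) (f : DLVert T1 T2 → T.V)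
    (hf : ∀ v w : DLVert T1 T2, (DLGraph T1 T2).Adj v w →
      T.parent (f v) = f w ∨ T.parent (f w) = f v) (x0 : T.V) :
    ∀ {v w : DLVert T1 T2} (p : (DLGraph T1 T2).Walk v w) (k : ℕ),
      T.parent^[k] (f v) = x0 → (¬ ∃ m, T.parent^[m] (f w) = x0) →
      k + 1 ≤ p.length := by
  intro v w p
  induction p with
  | nil =>
    intro k hk hw
    exact absurd ⟨k, hk⟩ hw
  | cons hadj q ih =>
    rename_i v u w'
    intro k hk hw
    rcases hf _ _ hadj with hvu | huv
    · match k with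
      | 0 =>
        simp [SimpleGraph.Walk.length_cons]
      | k' + 1 =>
        have : T.parent^[k'] (f u) = x0 := by
          rw [← hvu, ← Function.iterate_succ_apply]
          exact hk
        have := ih k' this hw
        simp only [SimpleGraph.Walk.length_cons]
        omega
    · have : T.parent^[k + 1] (f u) = x0 := by
        rw [Function.iterate_succ_apply, huv]
        exact hk
      have := ih (k + 1) this hw
      simp only [SimpleGraph.Walk.length_cons]
      omega

lemma escape1 (p0 : T1.V) :
    ∀ {v w : DLVert T1 T2} (p : (DLGraph T1 T2).Walk v w) (k : ℕ),
      T1.parent^[k] v.val.1 = p0 → (¬ ∃ m, T1.parent^[m] w.val.1 = p0) →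
      k + 1 ≤ p.length := by
  apply escape_lemma T1 (fun v => v.val.1)
  intro v w hadj
  rcases hadj with h | h
  · exact Or.inl h.1
  · exact Or.inr h.1

lemma escape2 (q0 : T2.V) :
    ∀ {v w : DLVert T1 T2} (p : (DLGraph T1 T2).Walk v w) (l : ℕ),
      T2.parent^[l] v.val.2 = q0 → (¬ ∃ m, T2.parent^[m] w.val.2 = q0) →
      l + 1 ≤ p.length := by
  apply escape_lemma T2 (fun v => v.val.2)
  intro v w hadj
  rcases hadj with h | h
  · exact Or.inr h.2
  · exact Or.inl h.2

/-- A vertex of the box having a neighbour outside the box lies in the extreme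
slices. If `v` is in the box at depth `k` (first coordinate) and there is a walk of
length `≤ r` from `v` to a point outside the box, then `k < r` or `H - k < r`. -/
lemma inner_boundary_slices (p0 : T1.V) (q0 : T2.V) {a : ℤ} {H : ℕ}
    (hp0 : T1.h p0 = a + H) (hq0 : T2.h q0 = -a)
    {v w : DLVert T1 T2} (hv : v ∈ DLbox p0 q0) (hw : w ∉ DLbox p0 q0)
    (p : (DLGraph T1 T2).Walk v w) {r : ℕ} (hr : p.length ≤ r) :
    ∃ k ≤ H, v ∈ boxSlice p0 q0 H k ∧ (k < r ∨ H - k < r) := by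
  obtain ⟨k, hkH, hk1, hk2⟩ := (mem_box_iff p0 q0 hp0 hq0 v).mp hv
  refine ⟨k, hkH, ⟨hk1, hk2⟩, ?_⟩
  rw [DLbox, Set.mem_setOf_eq, not_and_or] at hw
  rcases hw with hw | hw
  · left
    have := escape1 p0 p k hk1 hw
    omega
  · right
    have := escape2 q0 p (H - k) hk2 hw
    omega

/-- First-entry lemma: a walk from outside the box to a point of the box passes
within its length of a point in an extreme slice (depth `0` or `H`). -/
lemma first_entry (p0 : T1.V) (q0 : T2.V) {a : ℤ} {H : ℕ}
    (hp0 : T1.h p0 = a + H) (hq0 : T2.h q0 = -a) :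
    ∀ {v w : DLVert T1 T2} (p : (DLGraph T1 T2).Walk v w),
      v ∉ DLbox p0 q0 → w ∈ DLbox p0 q0 →
      ∃ y, y ∈ boxSlice p0 q0 H 0 ∪ boxSlice p0 q0 H H ∧
        ∃ q : (DLGraph T1 T2).Walk v y, q.length ≤ p.length := by
  intro v w p
  induction p with
  | nil =>
    intro hv hw
    exact absurd hw hv
  | cons hadj q ih =>
    rename_i v u w'
    intro hv hw
    by_cases hu : u ∈ DLbox p0 q0
    · -- u is a first entry point; it lies in an extreme slice
      obtain ⟨k, hkH, hk12, hkr⟩ := inner_boundary_slices p0 q0 hp0 hq0 hu hv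
        (SimpleGraph.Walk.cons hadj.symm SimpleGraph.Walk.nil) (le_refl 1)
      refine ⟨u, ?_, SimpleGraph.Walk.cons hadj SimpleGraph.Walk.nil, by
        simp [SimpleGraph.Walk.length_cons]⟩
      rcases hkr with hkr | hkr
      · have hk0 : k = 0 := by omega
        left; rw [hk0] at hk12; exact hk12
      · have hkH' : k = H := by omega
        right; rw [hkH'] at hk12
        rcases hk12 with ⟨h1, h2⟩
        exact ⟨h1, by simpa using h2⟩
    · obtain ⟨y, hy, q', hq'⟩ := ih hu hw
      exact ⟨y, hy, SimpleGraph.Walk.cons hadj q', by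
        simp only [SimpleGraph.Walk.length_cons]; omega⟩

end Walks
section Ball

variable {n : ℕ} {T1 T2 : OrientedTree n}

/-- Each vertex of `DL(n,n)` has at most `2n` neighbours. -/
lemma nbr_card (hn : 1 ≤ n) (u : DLVert T1 T2) :
    {v : DLVert T1 T2 | (DLGraph T1 T2).Adj v u}.Finite ∧
      {v : DLVert T1 T2 | (DLGraph T1 T2).Adj v u}.ncard ≤ 2 * n := by
  classical
  have hc1 := T1.child_finite hn u.val.1
  have hc2 := T2.child_finite hn u.val.2
  set C := ({c : T1.V // T1.parent c = u.val.1} ⊕ {c : T2.V // T2.parent c = u.val.2})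
  have hC : Finite C := by haveI := hc1; haveI := hc2; infer_instance
  let φ : {v : DLVert T1 T2 // (DLGraph T1 T2).Adj v u} → C := fun v =>
    if h : DLstep v.1 u then Sum.inl ⟨v.1.val.1, h.1⟩
    else Sum.inr ⟨v.1.val.2, by
      rcases v.2 with h' | h'
      · exact absurd h' h
      · exact h'.2⟩
  have hφ : Function.Injective φ := by
    rintro ⟨v, hv⟩ ⟨v', hv'⟩ heq
    simp only [φ] at heq
    split_ifs at heq with h h' hn1
    · -- both inl
      have h1 : v.val.1 = v'.val.1 := congrArg Subtype.val (Sum.inl.inj heq)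
      have h2 : v.val.2 = v'.val.2 := by rw [← h.2, ← h'.2]
      exact Subtype.ext (Subtype.ext (Prod.ext h1 h2))
    · -- both inr
      have h2 : v.val.2 = v'.val.2 := congrArg Subtype.val (Sum.inr.inj heq)
      have hd : DLstep u v := by
        rcases hv with h'' | h''
        · exact absurd h'' h
        · exact h''
      have hd' : DLstep u v' := by
        rcases hv' with h'' | h''
        · exact absurd h'' hn1
        · exact h''
      have h1 : v.val.1 = v'.val.1 := by rw [← hd.1, ← hd'.1]
      exact Subtype.ext (Subtype.ext (Prod.ext h1 h2))
  have hfin : Finite {v : DLVert T1 T2 // (DLGraph T1 T2).Adj v u} :=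
    Finite.of_injective φ hφ
  constructor
  · exact hfin
  · rw [← Nat.card_coe_set_eq]
    calc Nat.card {v : DLVert T1 T2 | (DLGraph T1 T2).Adj v u}
        ≤ Nat.card C := Nat.card_le_card_of_injective φ hφ
      _ = 2 * n := by
          rw [Nat.card_sum, T1.children, T2.children]; ring

/-- Balls of radius `r` in `DL(n,n)` are covered by a finset of size `(2n+1)^r`. -/
lemma ball_cover (hn : 1 ≤ n) (y : DLVert T1 T2) (r : ℕ) :
    ∃ F : Finset (DLVert T1 T2),
      {v : DLVert T1 T2 | ∃ p : (DLGraph T1 T2).Walk v y, p.length ≤ r} ⊆ ↑F ∧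
        F.card ≤ (2 * n + 1) ^ r := by
  classical
  induction r with
  | zero =>
    refine ⟨{y}, ?_, by simp⟩
    rintro v ⟨p, hp⟩
    have : p.length = 0 := Nat.le_zero.mp hp
    have := SimpleGraph.Walk.eq_of_length_eq_zero this
    simp [this]
  | succ r ih =>
    obtain ⟨F, hF, hFcard⟩ := ih
    have hnbr : ∀ u : DLVert T1 T2, ∃ N : Finset (DLVert T1 T2),
        {v : DLVert T1 T2 | (DLGraph T1 T2).Adj v u} ⊆ ↑N ∧ N.card ≤ 2 * n := by
      intro u
      obtain ⟨hfin, hcard⟩ := nbr_card hn u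
      refine ⟨hfin.toFinset, by simp, ?_⟩
      rw [← Set.ncard_eq_toFinset_card _ hfin]
      exact hcard
    choose N hN hNcard using hnbr
    refine ⟨F ∪ F.biUnion N, ?_, ?_⟩
    · rintro v ⟨p, hp⟩
      cases p with
      | nil =>
        have : y ∈ F := hF ⟨SimpleGraph.Walk.nil, by simp⟩
        simp [this]
      | cons hadj q =>
        rename_i u
        have hu : u ∈ F := hF ⟨q, by
          simp only [SimpleGraph.Walk.length_cons] at hp; omega⟩
        have : v ∈ N u := hN u hadj
        simp only [Finset.mem_coe, Finset.mem_union, Finset.mem_biUnion]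
        exact Or.inr ⟨u, hu, this⟩
    · calc (F ∪ F.biUnion N).card ≤ F.card + (F.biUnion N).card := Finset.card_union_le _ _
        _ ≤ F.card + ∑ u ∈ F, (N u).card := by
            gcongr; exact Finset.card_biUnion_le
        _ ≤ F.card + ∑ _u ∈ F, 2 * n := by gcongr with u hu; exact hNcard u
        _ = F.card * (2 * n + 1) := by rw [Finset.sum_const, smul_eq_mul]; ring
        _ ≤ (2 * n + 1) ^ r * (2 * n + 1) := by gcongr
        _ = (2 * n + 1) ^ (r + 1) := by rw [pow_succ]

end Ball
section Boundary

variable {n : ℕ} {T1 T2 : OrientedTree n}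

lemma boundary_bound (hn : 1 ≤ n) (p0 : T1.V) (q0 : T2.V) {a : ℤ} {H : ℕ}
    (hp0 : T1.h p0 = a + H) (hq0 : T2.h q0 = -a) (r : ℕ) :
    (DLrBoundary r (DLbox p0 q0)).ncard ≤ (2 * r + 2 * (2 * n + 1) ^ r) * n ^ H := by
  classical
  set S := DLbox p0 q0 with hS
  -- inner cover
  set Kr : Finset ℕ := (Finset.range (H + 1)).filter (fun k => k < r ∨ H - k < r) with hKr
  set Inner : Set (DLVert T1 T2) := ⋃ k ∈ Kr, boxSlice p0 q0 H k with hInner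
  -- outer cover
  choose F hF hFcard using ball_cover (T1 := T1) (T2 := T2) hn
  have hs0 := boxSlice_card hn p0 q0 hp0 hq0 (Nat.zero_le H)
  have hsH := boxSlice_card hn p0 q0 hp0 hq0 (le_refl H)
  set Y : Finset (DLVert T1 T2) := (hs0.1.union hsH.1).toFinset with hY
  set Outer : Set (DLVert T1 T2) := ⋃ y ∈ Y, (↑(F y r) : Set (DLVert T1 T2)) with hOuter
  -- the boundary is covered
  have hcov : DLrBoundary r S ⊆ Inner ∪ Outer := by
    rintro v (⟨hv, w, hw, hreach, hdist⟩ | ⟨hv, w, hw, hreach, hdist⟩)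
    · obtain ⟨p, hp⟩ := hreach.exists_walk_length_eq_dist
      obtain ⟨k, hkH, hvk, hkr⟩ := inner_boundary_slices p0 q0 hp0 hq0 hv hw p
        (r := r) (by omega)
      left
      exact Set.mem_iUnion.mpr ⟨k, Set.mem_iUnion.mpr
        ⟨Finset.mem_filter.mpr ⟨Finset.mem_range.mpr (by omega), hkr⟩, hvk⟩⟩
    · obtain ⟨p, hp⟩ := hreach.exists_walk_length_eq_dist
      obtain ⟨y, hy, q, hq⟩ := first_entry p0 q0 hp0 hq0 p hv hw
      right
      exact Set.mem_iUnion.mpr ⟨y, Set.mem_iUnion.mpr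
        ⟨(Set.Finite.mem_toFinset _).mpr hy, hF y r ⟨q, by omega⟩⟩⟩
  -- counting the inner cover
  have hInnerFin : Inner.Finite ∧ Inner.ncard ≤ 2 * r * n ^ H := by
    have hfin : ∀ k ∈ Kr, (boxSlice p0 q0 H k : Set (DLVert T1 T2)).Finite := by
      intro k hk
      rw [hKr, Finset.mem_filter, Finset.mem_range] at hk
      exact (boxSlice_card hn p0 q0 hp0 hq0 (by omega)).1
    obtain ⟨h1, h2⟩ := ncard_finset_biUnion_le Kr _ hfin
    refine ⟨h1, le_trans h2 ?_⟩
    have hcard : ∀ k ∈ Kr, (boxSlice p0 q0 H k : Set (DLVert T1 T2)).ncard = n ^ H := by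
      intro k hk
      rw [hKr, Finset.mem_filter, Finset.mem_range] at hk
      exact (boxSlice_card hn p0 q0 hp0 hq0 (by omega)).2
    rw [Finset.sum_congr rfl hcard, Finset.sum_const, smul_eq_mul]
    have hKcard : Kr.card ≤ 2 * r := by
      have hsub : Kr ⊆ Finset.range r ∪ (Finset.range r).image (fun j => H - j) := by
        intro k hk
        rw [hKr, Finset.mem_filter, Finset.mem_range] at hk
        rcases hk.2 with h | h
        · exact Finset.mem_union_left _ (Finset.mem_range.mpr h)
        · refine Finset.mem_union_right _ (Finset.mem_image.mpr ⟨H - k, Finset.mem_range.mpr h, by omega⟩)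
      calc Kr.card ≤ _ := Finset.card_le_card hsub
        _ ≤ (Finset.range r).card + ((Finset.range r).image (fun j => H - j)).card :=
            Finset.card_union_le _ _
        _ ≤ r + r := by
            gcongr
            · rw [Finset.card_range]
            · exact le_trans (Finset.card_image_le) (by rw [Finset.card_range])
        _ = 2 * r := by ring
    exact Nat.mul_le_mul_right _ hKcard
  -- counting the outer cover
  have hOuterFin : Outer.Finite ∧ Outer.ncard ≤ 2 * (2 * n + 1) ^ r * n ^ H := by
    have hfin : ∀ y ∈ Y, ((↑(F y r) : Set (DLVert T1 T2))).Finite :=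
      fun y _ => (F y r).finite_toSet
    obtain ⟨h1, h2⟩ := ncard_finset_biUnion_le Y _ hfin
    refine ⟨h1, le_trans h2 ?_⟩
    calc ∑ y ∈ Y, (↑(F y r) : Set (DLVert T1 T2)).ncard
        ≤ ∑ _y ∈ Y, (2 * n + 1) ^ r := by
          gcongr with y hy
          rw [Set.ncard_coe_finset]
          exact hFcard y r
      _ = Y.card * (2 * n + 1) ^ r := by rw [Finset.sum_const, smul_eq_mul]
      _ ≤ (2 * n ^ H) * (2 * n + 1) ^ r := by
          gcongr
          rw [hY]
          calc (hs0.1.union hsH.1).toFinset.card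
              = (boxSlice p0 q0 H 0 ∪ boxSlice p0 q0 H H).ncard :=
                (Set.ncard_eq_toFinset_card _ _).symm
            _ ≤ (boxSlice p0 q0 H 0).ncard + (boxSlice p0 q0 H H).ncard :=
                Set.ncard_union_le _ _
            _ = 2 * n ^ H := by rw [hs0.2, hsH.2]; ring
      _ = 2 * (2 * n + 1) ^ r * n ^ H := by ring
  calc (DLrBoundary r S).ncard
      ≤ (Inner ∪ Outer).ncard :=
        Set.ncard_le_ncard hcov (hInnerFin.1.union hOuterFin.1)
    _ ≤ Inner.ncard + Outer.ncard := Set.ncard_union_le _ _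
    _ ≤ 2 * r * n ^ H + 2 * (2 * n + 1) ^ r * n ^ H := by
        exact Nat.add_le_add hInnerFin.2 hOuterFin.2
    _ = (2 * r + 2 * (2 * n + 1) ^ r) * n ^ H := by ring

end Boundary
/-- For any increasing sequence of heights `H i`, any sequence of
boxes `S i` of height `H i` in `DL(n,n)` is a Følner sequence: `|S_H| = (H+1)·n^H`,
for every `r` there is a constant `C_r` with `|∂_r S_H| ≤ C_r · n^H`, and for every
`r > 0` the ratio `|∂_r S_{H i}|/|S_{H i}|` tends to `0`. -/
theorem stmt_10 (n : ℕ) (hn : 2 ≤ n) (T1 T2 : OrientedTree n)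
    (H : ℕ → ℕ) (hH : StrictMono H)
    (a : ℕ → ℤ) (p0 : ℕ → T1.V) (q0 : ℕ → T2.V)
    (hp0 : ∀ i, T1.h (p0 i) = a i + H i) (hq0 : ∀ i, T2.h (q0 i) = -(a i)) :
    (∀ i, (DLbox (p0 i) (q0 i)).ncard = (H i + 1) * n ^ (H i)) ∧
    (∀ r : ℕ, ∃ Cr : ℕ, ∀ i,
      (DLrBoundary r (DLbox (p0 i) (q0 i))).ncard ≤ Cr * n ^ (H i)) ∧
    (∀ r : ℕ, 0 < r →
      Filter.Tendsto
        (fun i => ((DLrBoundary r (DLbox (p0 i) (q0 i))).ncard : ℝ) /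
          ((DLbox (p0 i) (q0 i)).ncard : ℝ))
        Filter.atTop (nhds 0)) := by
  have hn1 : 1 ≤ n := by omega
  have hbox : ∀ i, (DLbox (p0 i) (q0 i)).ncard = (H i + 1) * n ^ (H i) :=
    fun i => (box_ncard hn1 (p0 i) (q0 i) (hp0 i) (hq0 i)).2
  have hbd : ∀ r i, (DLrBoundary r (DLbox (p0 i) (q0 i))).ncard ≤
      (2 * r + 2 * (2 * n + 1) ^ r) * n ^ (H i) :=
    fun r i => boundary_bound hn1 (p0 i) (q0 i) (hp0 i) (hq0 i) r
  refine ⟨hbox, fun r => ⟨2 * r + 2 * (2 * n + 1) ^ r, hbd r⟩, ?_⟩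
  intro r _hr
  set C : ℕ := 2 * r + 2 * (2 * n + 1) ^ r with hC
  have hf_le : ∀ i, ((DLrBoundary r (DLbox (p0 i) (q0 i))).ncard : ℝ) /
      ((DLbox (p0 i) (q0 i)).ncard : ℝ) ≤ (C : ℝ) / ((H i : ℝ) + 1) := by
    intro i
    have hpow : (0 : ℝ) < (n : ℝ) ^ (H i) := by positivity
    have hden : (0 : ℝ) < ((H i : ℝ) + 1) * (n : ℝ) ^ (H i) := by positivity
    rw [hbox i]
    have hnum : ((DLrBoundary r (DLbox (p0 i) (q0 i))).ncard : ℝ) ≤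
        (C : ℝ) * (n : ℝ) ^ (H i) := by
      have := hbd r i
      calc ((DLrBoundary r (DLbox (p0 i) (q0 i))).ncard : ℝ)
          ≤ ((C * n ^ (H i) : ℕ) : ℝ) := by exact_mod_cast this
        _ = (C : ℝ) * (n : ℝ) ^ (H i) := by push_cast; ring
    calc ((DLrBoundary r (DLbox (p0 i) (q0 i))).ncard : ℝ) /
        (((H i + 1) * n ^ (H i) : ℕ) : ℝ)
        = ((DLrBoundary r (DLbox (p0 i) (q0 i))).ncard : ℝ) /
          (((H i : ℝ) + 1) * (n : ℝ) ^ (H i)) := by push_cast; ring_nf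
      _ ≤ ((C : ℝ) * (n : ℝ) ^ (H i)) / (((H i : ℝ) + 1) * (n : ℝ) ^ (H i)) := by
          gcongr
      _ = (C : ℝ) / ((H i : ℝ) + 1) := by
          field_simp
  have hf_nonneg : ∀ i, 0 ≤ ((DLrBoundary r (DLbox (p0 i) (q0 i))).ncard : ℝ) /
      ((DLbox (p0 i) (q0 i)).ncard : ℝ) := by
    intro i; positivity
  have hg : Filter.Tendsto (fun i => (C : ℝ) / ((H i : ℝ) + 1)) Filter.atTop (nhds 0) := by
    have h1 : Filter.Tendsto H Filter.atTop Filter.atTop := hH.tendsto_atTop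
    have h2 : Filter.Tendsto (fun i => ((H i : ℝ) + 1)) Filter.atTop Filter.atTop := by
      apply Filter.tendsto_atTop_add_const_right
      exact tendsto_natCast_atTop_atTop.comp h1
    have h3 := h2.inv_tendsto_atTop
    have h4 := h3.const_mul (C : ℝ)
    simp only [mul_zero] at h4
    simpa [div_eq_mul_inv] using h4
  exact squeeze_zero hf_nonneg hf_le hg
end

section
/- If φ : ℚ_n → ℚ_n is K-bilipschitz and C ⊆ ℚ_n is a ball, then φ⁻¹(C) is a disjoint union of balls each of diameter at least diam(C)/K: for any ball A in the decomposition, n·μ(A) = sep(A) = sep(φ⁻¹(C)) ≥ (1/K)·n·μ(C). -/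
section Helpers

variable {n : ℕ} {X : Type*} [MetricSpace X]

lemma NadicModel.one_lt (hX : NadicModel n X) : (1:ℝ) < n := by
  have := hX.n_ge_two
  have : (2:ℝ) ≤ n := by exact_mod_cast this
  linarith

lemma NadicModel.zpos (hX : NadicModel n X) (p : ℤ) : (0:ℝ) < (n:ℝ) ^ p :=
  zpow_pos (lt_trans one_pos hX.one_lt) p

/-- In an ultrametric space, any point of a closed ball is a center. -/
lemma NadicModel.ball_eq (hX : NadicModel n X) {x y : X} {r : ℝ}
    (h : x ∈ Metric.closedBall y r) :
    Metric.closedBall x r = Metric.closedBall y r := by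
  have key : ∀ a b : X, a ∈ Metric.closedBall b r →
      Metric.closedBall a r ⊆ Metric.closedBall b r := by
    intro a b hab z hz
    simp only [Metric.mem_closedBall] at *
    calc dist z b ≤ max (dist z a) (dist a b) := hX.ultrametric z a b
    _ ≤ r := max_le hz hab
  have h' : y ∈ Metric.closedBall x r := by
    simp only [Metric.mem_closedBall, dist_comm] at h ⊢
    exact h
  exact subset_antisymm (key x y h) (key y x h')

/-- There is always a point at distance exactly `n^(i+1)`. -/
lemma NadicModel.exists_far (hX : NadicModel n X) (x : X) (i : ℤ) :
    ∃ y : X, dist x y = (n : ℝ) ^ (i + 1) := by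
  obtain ⟨S, hcard, hunion, hdisj⟩ := hX.subdiv x (i + 1)
  have hi1 : i + 1 - 1 = i := by ring
  rw [hi1] at hunion hdisj
  have hx : x ∈ ⋃ y ∈ S, Metric.closedBall y ((n:ℝ) ^ i) := by
    rw [← hunion]
    exact Metric.mem_closedBall_self (hX.zpos _).le
  simp only [Set.mem_iUnion, exists_prop] at hx
  obtain ⟨y0, hy0S, hy0⟩ := hx
  obtain ⟨y1, hy1S, hne⟩ :=
    Finset.exists_mem_ne (by have := hX.n_ge_two; omega : 1 < S.card) y0
  have hy1mem : y1 ∈ Metric.closedBall x ((n:ℝ) ^ (i+1)) := by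
    rw [hunion]
    exact Set.mem_biUnion hy1S (Metric.mem_closedBall_self (hX.zpos _).le)
  have hgt : (n:ℝ) ^ i < dist x y1 := by
    by_contra hc
    push_neg at hc
    have h1 : y1 ∈ Metric.closedBall x ((n:ℝ) ^ i) :=
      Metric.mem_closedBall.mpr (by rw [dist_comm]; exact hc)
    rw [hX.ball_eq hy0] at h1
    exact Set.disjoint_left.mp (hdisj hy1S hy0S hne)
      (Metric.mem_closedBall_self (hX.zpos _).le) h1
  have hxy : x ≠ y1 := by
    intro h
    rw [h, dist_self] at hgt
    exact absurd hgt (not_lt.mpr (hX.zpos i).le)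
  obtain ⟨p, hp⟩ := hX.dist_pow x y1 hxy
  have h1 : i < p := by
    by_contra hc
    push_neg at hc
    have := zpow_le_zpow_right₀ hX.one_lt.le hc
    rw [← hp] at this
    exact absurd hgt (not_lt.mpr this)
  have h2 : p ≤ i + 1 := by
    by_contra hc
    push_neg at hc
    have := zpow_lt_zpow_right₀ hX.one_lt hc
    rw [← hp] at this
    have := Metric.mem_closedBall.mp hy1mem
    rw [dist_comm] at this
    linarith
  have : p = i + 1 := by omega
  exact ⟨y1, by rw [hp, this]⟩

/-- Lower bound on distances between a point of a clone and a point outside. -/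
lemma NadicModel.clone_lb (hX : NadicModel n X) {a x y : X} {k : ℤ}
    (hx : x ∈ Metric.closedBall a ((n:ℝ) ^ k))
    (hy : y ∉ Metric.closedBall a ((n:ℝ) ^ k)) :
    (n:ℝ) ^ (k + 1) ≤ dist x y := by
  simp only [Metric.mem_closedBall, not_le] at hx hy
  have hay : (n:ℝ) ^ k < dist a y := by rw [dist_comm]; exact hy
  have h1 : dist a y ≤ max (dist a x) (dist x y) := hX.ultrametric a x y
  have hdxy : (n:ℝ) ^ k < dist x y := by
    rcases max_cases (dist a x) (dist x y) with ⟨he, _⟩ | ⟨he, _⟩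
    · rw [he] at h1
      have : dist a x ≤ (n:ℝ) ^ k := by rw [dist_comm]; exact hx
      linarith
    · rw [he] at h1; linarith
  have hne : x ≠ y := by
    intro h
    rw [h, dist_self] at hdxy
    exact absurd hdxy (not_lt.mpr (hX.zpos k).le)
  obtain ⟨p, hp⟩ := hX.dist_pow x y hne
  have h2 : k < p := by
    by_contra hc
    push_neg at hc
    have := zpow_le_zpow_right₀ hX.one_lt.le hc
    rw [← hp] at this
    linarith
  rw [hp]
  exact zpow_le_zpow_right₀ hX.one_lt.le (by omega)

/-- The separation of a clone of radius `n^k` is `n^(k+1)`. -/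
lemma NadicModel.sep_clone (hX : NadicModel n X) (a : X) (k : ℤ) :
    sep (Metric.closedBall a ((n:ℝ) ^ k)) = (n:ℝ) ^ (k + 1) := by
  apply IsLeast.csInf_eq
  constructor
  · obtain ⟨y, hy⟩ := hX.exists_far a k
    refine ⟨a, Metric.mem_closedBall_self (hX.zpos _).le, y, ?_, hy.symm⟩
    simp only [Set.mem_compl_iff, Metric.mem_closedBall, not_le, dist_comm, hy]
    exact zpow_lt_zpow_right₀ hX.one_lt (lt_add_one k)
  · rintro d ⟨x, hx, y, hy, rfl⟩
    exact hX.clone_lb hx hy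

end Helpers

/-- If φ : ℚ_n → ℚ_n is a surjective K-bilipschitz map and C is a
clone, then φ⁻¹(C) is a finite disjoint union of clones, and each clone A of the
decomposition satisfies n·μ(A) = sep(A) = sep(φ⁻¹(C)) ≥ (1/K)·n·μ(C), where
μ(ball) = diam(ball); in particular diam(A) ≥ diam(C)/K. -/
theorem stmt_16 (n : ℕ) {X : Type*} [MetricSpace X] (hX : NadicModel n X)
    (K : ℝ) (hK : 1 ≤ K) (φ : X → X) (hsurj : Function.Surjective φ)
    (hbilip : ∀ x y : X,
      (1 / K) * dist x y ≤ dist (φ x) (φ y) ∧ dist (φ x) (φ y) ≤ K * dist x y)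
    (C : Set X) (hC : IsClone n C) :
    ∃ 𝒜 : Finset (Set X), (∀ A ∈ 𝒜, IsClone n A) ∧
      ((𝒜 : Set (Set X)).Pairwise Disjoint) ∧
      φ ⁻¹' C = ⋃ A ∈ 𝒜, A ∧
      ∀ A ∈ 𝒜,
        (n : ℝ) * Metric.diam A = sep A ∧
        sep A = sep (φ ⁻¹' C) ∧
        (1 / K) * ((n : ℝ) * Metric.diam C) ≤ sep (φ ⁻¹' C) ∧
        Metric.diam C / K ≤ Metric.diam A := by
  classical
  obtain ⟨c, j, rfl⟩ := hC
  haveI := hX.proper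
  have h1n : (1:ℝ) < n := hX.one_lt
  have hn0 : (0:ℝ) < n := lt_trans one_pos h1n
  have hK0 : 0 < K := lt_of_lt_of_le one_pos hK
  set C := Metric.closedBall c ((n:ℝ) ^ j) with hCdef
  set P := φ ⁻¹' C with hPdef
  -- φ is continuous
  have hcont : Continuous φ := by
    have hl : LipschitzWith K.toNNReal φ := LipschitzWith.of_dist_le_mul (fun x y => by
      rw [Real.coe_toNNReal K hK0.le]; exact (hbilip x y).2)
    exact hl.continuous
  have hPclosed : IsClosed P := Metric.isClosed_closedBall.preimage hcont
  obtain ⟨x0, hx0⟩ : P.Nonempty := by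
    obtain ⟨x, hx⟩ := hsurj c
    exact ⟨x, by
      simp only [hPdef, Set.mem_preimage, hx, hCdef]
      exact Metric.mem_closedBall_self (hX.zpos j).le⟩
  obtain ⟨z0, hz0⟩ : Pᶜ.Nonempty := by
    obtain ⟨y, hy⟩ := hX.exists_far c j
    obtain ⟨z, hz⟩ := hsurj y
    refine ⟨z, ?_⟩
    simp only [Set.mem_compl_iff, hPdef, Set.mem_preimage, hz, hCdef,
      Metric.mem_closedBall, not_le, dist_comm, hy]
    exact zpow_lt_zpow_right₀ h1n (lt_add_one j)
  -- P is compact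
  have hx0C : dist (φ x0) c ≤ (n:ℝ) ^ j := hx0
  have hPsub : P ⊆ Metric.closedBall x0 (K * (n:ℝ) ^ j) := by
    intro x hx
    have h1 : dist (φ x) (φ x0) ≤ (n:ℝ) ^ j := by
      calc dist (φ x) (φ x0) ≤ max (dist (φ x) c) (dist c (φ x0)) :=
            hX.ultrametric _ c _
      _ ≤ (n:ℝ) ^ j := max_le hx (by rw [dist_comm]; exact hx0C)
    have h2 := (hbilip x x0).1
    rw [Metric.mem_closedBall]
    have h3 : (1/K) * dist x x0 ≤ (n:ℝ) ^ j := le_trans h2 h1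
    have h4 : K * ((1/K) * dist x x0) ≤ K * (n:ℝ) ^ j :=
      mul_le_mul_of_nonneg_left h3 hK0.le
    calc dist x x0 = K * ((1/K) * dist x x0) := by field_simp
    _ ≤ K * (n:ℝ) ^ j := h4
  have hPcomp : IsCompact P :=
    (isCompact_closedBall x0 _).of_isClosed_subset hPclosed hPsub
  -- P is a union of balls of uniform radius n^i
  obtain ⟨m0, hm0⟩ : ∃ m0 : ℕ, K < (n:ℝ) ^ m0 := pow_unbounded_of_one_lt K h1n
  set i : ℤ := j - m0 with hidef
  have hsubball : ∀ x ∈ P, Metric.closedBall x ((n:ℝ) ^ i) ⊆ P := by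
    intro x hx y hy
    rw [Metric.mem_closedBall] at hy
    have h1 : dist (φ y) (φ x) ≤ K * (n:ℝ) ^ i :=
      le_trans (hbilip y x).2 (mul_le_mul_of_nonneg_left hy hK0.le)
    have h2 : K * (n:ℝ) ^ i ≤ (n:ℝ) ^ j := by
      have he : (n:ℝ) ^ (m0:ℤ) * (n:ℝ) ^ i = (n:ℝ) ^ j := by
        rw [← zpow_add₀ (ne_of_gt hn0)]
        congr 1
        omega
      have hc : K ≤ (n:ℝ) ^ (m0:ℤ) := by
        rw [zpow_natCast]; exact hm0.le
      calc K * (n:ℝ) ^ i ≤ (n:ℝ) ^ (m0:ℤ) * (n:ℝ) ^ i :=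
            mul_le_mul_of_nonneg_right hc (hX.zpos i).le
      _ = (n:ℝ) ^ j := he
    show φ y ∈ C
    rw [hCdef, Metric.mem_closedBall]
    calc dist (φ y) c ≤ max (dist (φ y) (φ x)) (dist (φ x) c) :=
          hX.ultrametric _ _ _
    _ ≤ (n:ℝ) ^ j := max_le (le_trans h1 h2) hx
  -- the separation set of P
  set D : Set ℝ := {d | ∃ x ∈ P, ∃ y ∈ Pᶜ, d = dist x y} with hDdef
  have hsepPD : sep P = sInf D := rfl
  have hDpow : ∀ d ∈ D, ∃ p : ℤ, i + 1 ≤ p ∧ d = (n:ℝ) ^ p := by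
    rintro d ⟨x, hx, y, hy, rfl⟩
    have hfar : (n:ℝ) ^ i < dist x y := by
      by_contra hc
      push_neg at hc
      exact hy (hsubball x hx (Metric.mem_closedBall.mpr (by rw [dist_comm]; exact hc)))
    have hne : x ≠ y := by
      intro h
      rw [h, dist_self] at hfar
      exact absurd hfar (not_lt.mpr (hX.zpos i).le)
    obtain ⟨p, hp⟩ := hX.dist_pow x y hne
    refine ⟨p, ?_, hp⟩
    by_contra hc
    push_neg at hc
    have := zpow_le_zpow_right₀ h1n.le (by omega : p ≤ i)
    rw [← hp] at this
    linarith
  have hDne : D.Nonempty := ⟨dist x0 z0, x0, hx0, z0, hz0, rfl⟩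
  obtain ⟨d0, hd0D⟩ := hDne
  obtain ⟨p0, hp0ge, hp0⟩ := hDpow d0 hd0D
  set E : Finset ℤ := (Finset.Icc (i+1) p0).filter (fun p => (n:ℝ) ^ p ∈ D) with hEdef
  have hp0E : p0 ∈ E := by
    rw [hEdef, Finset.mem_filter, Finset.mem_Icc]
    exact ⟨⟨hp0ge, le_refl p0⟩, hp0 ▸ hd0D⟩
  set pm : ℤ := E.min' ⟨p0, hp0E⟩ with hpmdef
  have hpmE : pm ∈ E := E.min'_mem _
  have hpmItmp := Finset.mem_filter.mp hpmE
  have hpmIcc := Finset.mem_Icc.mp hpmItmp.1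
  have hpmD : (n:ℝ) ^ pm ∈ D := hpmItmp.2
  have hleast : IsLeast D ((n:ℝ) ^ pm) := by
    refine ⟨hpmD, ?_⟩
    rintro d hd
    obtain ⟨p, hpge, rfl⟩ := hDpow d hd
    by_cases hle : p ≤ p0
    · have hpE : p ∈ E :=
        Finset.mem_filter.mpr ⟨Finset.mem_Icc.mpr ⟨hpge, hle⟩, hd⟩
      exact zpow_le_zpow_right₀ h1n.le (E.min'_le p hpE)
    · push_neg at hle
      exact zpow_le_zpow_right₀ h1n.le (by omega : pm ≤ p)
  have hsep : sep P = (n:ℝ) ^ pm := hleast.csInf_eq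
  set m : ℤ := pm - 1 with hmdef
  have hpm1 : pm = m + 1 := by omega
  have hball : ∀ x ∈ P, Metric.closedBall x ((n:ℝ) ^ m) ⊆ P := by
    intro x hx y hy
    by_contra hyP
    have h1 : (n:ℝ) ^ pm ≤ dist x y := hleast.2 ⟨x, hx, y, hyP, rfl⟩
    rw [Metric.mem_closedBall] at hy
    have h2 : dist x y ≤ (n:ℝ) ^ m := by rw [dist_comm]; exact hy
    have h3 : (n:ℝ) ^ m < (n:ℝ) ^ pm := zpow_lt_zpow_right₀ h1n (by omega)
    linarith
  -- the key bilipschitz inequality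
  have hkey : (n:ℝ) ^ (j+1) ≤ K * (n:ℝ) ^ pm := by
    obtain ⟨x, hx, y, hy, heq⟩ := hpmD
    have h1 : (n:ℝ) ^ (j+1) ≤ dist (φ x) (φ y) := hX.clone_lb hx hy
    calc (n:ℝ) ^ (j+1) ≤ dist (φ x) (φ y) := h1
    _ ≤ K * dist x y := (hbilip x y).2
    _ = K * (n:ℝ) ^ pm := by rw [← heq]
  -- balls are open, extract a finite subcover
  have hopen : ∀ x : X, IsOpen (Metric.closedBall x ((n:ℝ) ^ m)) := by
    intro x
    rw [Metric.isOpen_iff]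
    intro y hy
    refine ⟨(n:ℝ) ^ m, hX.zpos m, fun z hz => ?_⟩
    rw [Metric.mem_closedBall]
    calc dist z x ≤ max (dist z y) (dist y x) := hX.ultrametric z y x
    _ ≤ (n:ℝ) ^ m := max_le (le_of_lt (Metric.mem_ball.mp hz))
        (Metric.mem_closedBall.mp hy)
  obtain ⟨t, htP, htfin, htcov⟩ := hPcomp.elim_finite_subcover_image
    (fun x (_ : x ∈ P) => hopen x)
    (fun x hx => Set.mem_biUnion hx (Metric.mem_closedBall_self (hX.zpos m).le))
  set 𝒜 : Finset (Set X) :=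
    htfin.toFinset.image (fun x => Metric.closedBall x ((n:ℝ) ^ m)) with h𝒜
  have hmem𝒜 : ∀ A ∈ 𝒜, ∃ x ∈ P, A = Metric.closedBall x ((n:ℝ) ^ m) := by
    intro A hA
    rw [h𝒜, Finset.mem_image] at hA
    obtain ⟨x, hxt, rfl⟩ := hA
    exact ⟨x, htP (htfin.mem_toFinset.mp hxt), rfl⟩
  refine ⟨𝒜, ?_, ?_, ?_, ?_⟩
  · intro A hA
    obtain ⟨x, _, rfl⟩ := hmem𝒜 A hA
    exact ⟨x, m, rfl⟩
  · intro A hA B hB hAB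
    obtain ⟨x, hx, rfl⟩ := hmem𝒜 A (Finset.mem_coe.mp hA)
    obtain ⟨y, hy, rfl⟩ := hmem𝒜 B (Finset.mem_coe.mp hB)
    rw [Set.disjoint_left]
    intro z hzA hzB
    exact hAB ((hX.ball_eq hzA).symm.trans (hX.ball_eq hzB))
  · apply Set.Subset.antisymm
    · intro z hz
      obtain ⟨x, hxt, hzx⟩ := Set.mem_iUnion₂.mp (htcov hz)
      exact Set.mem_iUnion₂.mpr ⟨_,
        Finset.mem_image.mpr ⟨x, htfin.mem_toFinset.mpr hxt, rfl⟩, hzx⟩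
    · intro z hz
      obtain ⟨A, hA, hzA⟩ := Set.mem_iUnion₂.mp hz
      obtain ⟨x, hxP, rfl⟩ := hmem𝒜 A hA
      exact hball x hxP hzA
  · intro A hA
    obtain ⟨x, hxP, rfl⟩ := hmem𝒜 A hA
    have hdA : Metric.diam (Metric.closedBall x ((n:ℝ) ^ m)) = (n:ℝ) ^ m :=
      hX.diam_ball x m
    have hsA : sep (Metric.closedBall x ((n:ℝ) ^ m)) = (n:ℝ) ^ (m+1) :=
      hX.sep_clone x m
    have hdC : Metric.diam C = (n:ℝ) ^ j := hX.diam_ball c j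
    have hnm : (n:ℝ) * (n:ℝ) ^ m = (n:ℝ) ^ (m+1) := by
      rw [zpow_add_one₀ (ne_of_gt hn0), mul_comm]
    have hnj : (n:ℝ) * (n:ℝ) ^ j = (n:ℝ) ^ (j+1) := by
      rw [zpow_add_one₀ (ne_of_gt hn0), mul_comm]
    refine ⟨by rw [hdA, hnm, hsA], by rw [hsA, hsep, hpm1], ?_, ?_⟩
    · rw [hdC, hsep, hnj]
      have h2 : (1/K) * (n:ℝ) ^ (j+1) ≤ (1/K) * (K * (n:ℝ) ^ pm) :=
        mul_le_mul_of_nonneg_left hkey (by positivity)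
      have h3 : (1/K) * (K * (n:ℝ) ^ pm) = (n:ℝ) ^ pm := by field_simp
      linarith
    · rw [hdC, hdA, div_le_iff₀ hK0]
      have h1 : (n:ℝ) * (n:ℝ) ^ j ≤ K * ((n:ℝ) * (n:ℝ) ^ m) := by
        rw [hnj, hnm, ← hpm1]; exact hkey
      nlinarith [hn0]
end

section
/- If f, g : X → Y are maps between UDBG spaces with sup_x d(f(x), g(x)) < ∞ and both are quasi-isometries with uniformly finite fibers, then f_*([X]) = g_*([X]) in H_0^{uf}(Y), where f_*([X]) = [Σ_{y} |f⁻¹(y)|·y]. -/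
open Filter

/-- The `r`-boundary of a set `S` in a metric space: points of `S` within distance
`r` of the complement, together with points of the complement within distance `r`
of `S`. -/
def rBoundary {X : Type*} [MetricSpace X] (r : ℝ) (S : Set X) : Set X :=
  {x | (x ∈ S ∧ ∃ y ∉ S, dist x y ≤ r) ∨ (x ∉ S ∧ ∃ y ∈ S, dist x y ≤ r)}

/-- A uniformly discrete bounded geometry (UDBG) space. -/
structure IsUDBG (X : Type*) [MetricSpace X] : Prop where
  discrete : ∃ ε > (0 : ℝ), ∀ x y : X, x ≠ y → ε ≤ dist x y
  bddGeom : ∀ r : ℝ, ∃ M : ℕ, ∀ x : X, (Metric.closedBall x r).ncard ≤ M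

/-- A Følner sequence of finite sets: `|∂_r S_i|/|S_i| → 0` for every `r > 0`. -/
def IsFolnerSeq {X : Type*} [MetricSpace X] (S : ℕ → Finset X) : Prop :=
  (∀ i, (S i).Nonempty) ∧
  ∀ r : ℝ, 0 < r →
    Tendsto (fun i => ((rBoundary r (S i : Set X)).ncard : ℝ) / ((S i).card : ℝ))
      atTop (nhds 0)

/-- `b : X × X → ℤ` is a uniformly finite 1-chain with propagation `R` and
coefficient bound `M'`. -/
def IsUFOneChain {X : Type*} [MetricSpace X] (R : ℝ) (M' : ℕ) (b : X × X → ℤ) : Prop :=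
  (∀ p : X × X, |b p| ≤ (M' : ℤ)) ∧
  (∀ p : X × X, R < dist p.1 p.2 → b p = 0) ∧
  (∀ z : X, {x : X | b (x, z) ≠ 0}.Finite ∧ {y : X | b (z, y) ≠ 0}.Finite)

/-- The 0-chain `a : X → ℤ` is the boundary `∂b` of the 1-chain `b`
(where `∂(x,y) = y - x`). -/
def IsBoundaryOf {X : Type*} [MetricSpace X] (a : X → ℤ) (b : X × X → ℤ) : Prop :=
  ∀ z : X, a z = (∑ᶠ x : X, b (x, z)) - ∑ᶠ y : X, b (z, y)

theorem aux_sum {X Y : Type*} (u v : X → Y) (z : Y) (h : (u ⁻¹' {z}).Finite) :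
    ∑ᶠ y : Y, (Nat.card {x : X // v x = y ∧ u x = z} : ℤ) = Nat.card (u ⁻¹' {z}) := by
  classical
  set S : Finset X := h.toFinset with hS
  set T : Finset Y := S.image v with hT
  have key : ∀ y : Y, (Nat.card {x : X // v x = y ∧ u x = z} : ℤ)
      = ((S.filter (fun x => v x = y)).card : ℤ) := by
    intro y
    have : {x : X | v x = y ∧ u x = z} = ↑(S.filter (fun x => v x = y)) := by
      ext x
      simp [hS, Set.Finite.mem_toFinset, and_comm]
    have h2 : Nat.card {x : X // v x = y ∧ u x = z}
        = Nat.card (↑(S.filter (fun x => v x = y)) : Set X) := by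
      rw [← this]; rfl
    rw [h2, Nat.card_coe_set_eq, Set.ncard_coe_finset]
  have hsupp : (Function.support fun y => (Nat.card {x : X // v x = y ∧ u x = z} : ℤ)) ⊆ ↑T := by
    intro y hy
    simp only [Function.mem_support] at hy
    have : Nonempty {x : X // v x = y ∧ u x = z} := by
      rcases Nat.eq_zero_or_pos (Nat.card {x : X // v x = y ∧ u x = z}) with h0 | h0
      · simp [h0] at hy
      · exact (Nat.card_pos_iff.mp h0).1
    obtain ⟨⟨x, hvx, hux⟩⟩ := this
    simp only [hT, Finset.coe_image, Set.mem_image, Finset.mem_coe]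
    exact ⟨x, by simp [hS, hux], hvx⟩
  rw [finsum_eq_finset_sum_of_support_subset _ hsupp]
  have : ∑ y ∈ T, (Nat.card {x : X // v x = y ∧ u x = z} : ℤ)
      = ∑ y ∈ T, ((S.filter (fun x => v x = y)).card : ℤ) := by
    exact Finset.sum_congr rfl fun y _ => key y
  rw [this]
  have hcard : S.card = ∑ y ∈ T, (S.filter (fun x => v x = y)).card :=
    Finset.card_eq_sum_card_fiberwise (fun x hx => Finset.mem_image_of_mem v hx)
  have : Nat.card (u ⁻¹' {z}) = S.card := by
    rw [Nat.card_coe_set_eq, Set.ncard_eq_toFinset_card _ h]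
  rw [this, hcard]
  push_cast
  rfl


/-- If `f, g : X → Y` are quasi-isometries between UDBG spaces with
uniformly finite fibers and `sup_x d(f(x), g(x)) < ∞`, then
`f_*([X]) = g_*([X])` in `H_0^{uf}(Y)`: the difference of the fiber-counting
0-chains is the boundary of a uniformly finite 1-chain. -/
theorem stmt_18 {X Y : Type*} [MetricSpace X] [MetricSpace Y]
    (hX : IsUDBG X) (hY : IsUDBG Y)
    (f g : X → Y) (K C : ℝ) (hK : 1 ≤ K) (hC : 0 ≤ C)
    (hfqi : ∀ x y : X,
      (1 / K) * dist x y - C ≤ dist (f x) (f y) ∧ dist (f x) (f y) ≤ K * dist x y + C)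
    (hgqi : ∀ x y : X,
      (1 / K) * dist x y - C ≤ dist (g x) (g y) ∧ dist (g x) (g y) ≤ K * dist x y + C)
    (hfdense : ∃ D : ℝ, ∀ y : Y, ∃ x : X, dist y (f x) ≤ D)
    (R0 : ℝ) (hfg : ∀ x : X, dist (f x) (g x) ≤ R0)
    (Nfib : ℕ)
    (hffin : ∀ y : Y, (f ⁻¹' {y}).Finite) (hgfin : ∀ y : Y, (g ⁻¹' {y}).Finite)
    (hfbd : ∀ y : Y, Nat.card (f ⁻¹' {y}) ≤ Nfib)
    (hgbd : ∀ y : Y, Nat.card (g ⁻¹' {y}) ≤ Nfib) :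
    ∃ (R : ℝ) (M' : ℕ) (b : Y × Y → ℤ), IsUFOneChain R M' b ∧
      IsBoundaryOf
        (fun y => (Nat.card (f ⁻¹' {y}) : ℤ) - (Nat.card (g ⁻¹' {y}) : ℤ)) b := by
  classical
  refine ⟨R0, Nfib, fun p => (Nat.card {x : X // g x = p.1 ∧ f x = p.2} : ℤ),
    ⟨?_, ?_, ?_⟩, ?_⟩
  · intro p
    rw [abs_of_nonneg (by positivity)]
    have hsub : {x : X | g x = p.1 ∧ f x = p.2} ⊆ g ⁻¹' {p.1} := fun x hx => hx.1
    have e1 : Nat.card {x : X // g x = p.1 ∧ f x = p.2}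
        = ({x : X | g x = p.1 ∧ f x = p.2}).ncard := Nat.card_coe_set_eq _
    have e2 : Nat.card (g ⁻¹' {p.1}) = (g ⁻¹' {p.1}).ncard := Nat.card_coe_set_eq _
    have : Nat.card {x : X // g x = p.1 ∧ f x = p.2} ≤ Nat.card (g ⁻¹' {p.1}) := by
      rw [e1, e2]; exact Set.ncard_le_ncard hsub (hgfin p.1)
    simp only []
    exact_mod_cast this.trans (hgbd p.1)
  · intro p hp
    by_contra hne
    have h0 : Nat.card {x : X // g x = p.1 ∧ f x = p.2} ≠ 0 := by
      intro h; exact hne (by simp [h])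
    obtain ⟨⟨x, hx1, hx2⟩⟩ := Nat.card_ne_zero.mp h0 |>.1
    have : dist p.1 p.2 ≤ R0 := by
      rw [← hx1, ← hx2, dist_comm]; exact hfg x
    linarith
  · intro z
    constructor
    · apply Set.Finite.subset ((hffin z).image g)
      intro y hy
      simp only [Set.mem_setOf_eq] at hy
      have h0 : Nat.card {x : X // g x = y ∧ f x = z} ≠ 0 := by
        intro h; rw [h] at hy; exact hy rfl
      obtain ⟨⟨x, hx1, hx2⟩⟩ := Nat.card_ne_zero.mp h0 |>.1
      exact ⟨x, hx2, hx1⟩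
    · apply Set.Finite.subset ((hgfin z).image f)
      intro y hy
      simp only [Set.mem_setOf_eq] at hy
      have h0 : Nat.card {x : X // g x = z ∧ f x = y} ≠ 0 := by
        intro h; rw [h] at hy; exact hy rfl
      obtain ⟨⟨x, hx1, hx2⟩⟩ := Nat.card_ne_zero.mp h0 |>.1
      exact ⟨x, hx1, hx2⟩
  · intro z
    have h1 : ∑ᶠ x : Y, (Nat.card {w : X // g w = x ∧ f w = z} : ℤ)
        = Nat.card (f ⁻¹' {z}) := aux_sum f g z (hffin z)
    have h2 : ∑ᶠ y : Y, (Nat.card {w : X // g w = z ∧ f w = y} : ℤ)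
        = Nat.card (g ⁻¹' {z}) := by
      have := aux_sum g f z (hgfin z)
      rw [← this]
      exact finsum_congr fun y => by
        rw [Nat.card_congr (Equiv.subtypeEquivRight fun x => and_comm)]
    simp only [h1, h2]
end
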